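/- arXiv:2407.11795 — 11 statements merged into one kernel-verified Lean document; each statement's English description precedes it below -/
import Mathlib

section
/- Let p ∈ (0,1), let L ≥ 4/p be a real number, and set ρ = 1 - 7/(pL²). Then for any z = ρe^{iθ} with |θ| ≤ π/L, the complex number w = (z - q)/p (where q = 1-p) satisfies |w| ≤ 1. -/
open Real Complex

/-! With `ρ = 1 - ε` and `q = 1 - p` one has
`|ρe^{iθ} - q|² = (ρ - q)² + 2ρq(1 - cos θ) ≤ (p - ε)² + θ²`, so it suffices that
`ε² + θ² ≤ 2pε = 14/L²`. Since `pL ≥ 4` gives `ε ≤ 7/(4L)` and `θ² ≤ π²/L²`,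
this reduces to `49/16 + π² ≤ 14`. -/

theorem Complex.sq_norm_ofReal_mul_exp_sub_ofReal (ρ q θ : ℝ) :
    ‖(ρ : ℂ) * exp (θ * I) - q‖ ^ 2 = (ρ - q) ^ 2 + 2 * ρ * q * (1 - Real.cos θ) := by
  have hdecomp : (ρ : ℂ) * exp (θ * I) - q
      = ((ρ * Real.cos θ - q : ℝ) : ℂ) + ((ρ * Real.sin θ : ℝ) : ℂ) * I := by
    rw [exp_mul_I, ← ofReal_cos, ← ofReal_sin]
    push_cast
    ring
  rw [hdecomp, Complex.sq_norm, normSq_add_mul_I]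
  linear_combination ρ ^ 2 * Real.sin_sq_add_cos_sq θ

theorem Complex.sq_norm_ofReal_mul_exp_sub_ofReal_le {ρ q : ℝ} (hρq : ρ * q ≤ 1) (θ : ℝ) :
    ‖(ρ : ℂ) * exp (θ * I) - q‖ ^ 2 ≤ (ρ - q) ^ 2 + θ ^ 2 := by
  rw [sq_norm_ofReal_mul_exp_sub_ofReal]
  have hcos : 1 - θ ^ 2 / 2 ≤ Real.cos θ := one_sub_sq_div_two_le_cos
  nlinarith [mul_nonneg (sub_nonneg.2 hρq) (sub_nonneg.2 (Real.cos_le_one θ))]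

theorem sq_seven_div_add_sq_le {p L θ : ℝ} (hL : 0 < L) (hpL : 4 ≤ p * L)
    (hθ : |θ| ≤ π / L) : (7 / (p * L ^ 2)) ^ 2 + θ ^ 2 ≤ 14 / L ^ 2 := by
  have hp : 0 < p := pos_of_mul_pos_left (by linarith) hL.le
  have hε : (7 / (p * L ^ 2)) ^ 2 ≤ 49 / 16 / L ^ 2 := by
    rw [div_pow, div_div, div_le_div_iff₀ (by positivity) (by positivity)]
    nlinarith [mul_le_mul_of_nonneg_left (pow_le_pow_left₀ (by norm_num) hpL 2)
      (by positivity : (0 : ℝ) ≤ 49 * L ^ 2)]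
  have hθ : θ ^ 2 ≤ π ^ 2 / L ^ 2 := by
    rw [← div_pow, ← sq_abs]
    exact pow_le_pow_left₀ (abs_nonneg θ) hθ 2
  have hπ : π ^ 2 ≤ 14 - 49 / 16 := by nlinarith [pi_lt_d2, pi_pos]
  calc (7 / (p * L ^ 2)) ^ 2 + θ ^ 2 ≤ (49 / 16 + π ^ 2) / L ^ 2 := by
        rw [add_div]; gcongr
    _ ≤ 14 / L ^ 2 := by gcongr; linarith

/-- For `p ∈ (0,1)`, `L ≥ 4/p`, `ρ = 1 - 7/(pL²)` and `z = ρe^{iθ}` with `|θ| ≤ π/L`,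
the number `w = (z - q)/p` (with `q = 1-p`) satisfies `|w| ≤ 1`. -/
theorem stmt_1 (p : ℝ) (hp0 : 0 < p) (hp1 : p < 1) (L : ℝ) (hL : 4 / p ≤ L)
    (θ : ℝ) (hθ : |θ| ≤ π / L) :
    ‖((((1 - 7 / (p * L ^ 2)) : ℝ) : ℂ) * Complex.exp (θ * Complex.I)
        - ((1 - p : ℝ) : ℂ)) / (p : ℂ)‖ ≤ 1 := by
  have hLpos : 0 < L := (div_pos four_pos hp0).trans_le hL
  have hpL : 4 ≤ p * L := by rwa [div_le_iff₀ hp0, mul_comm] at hL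
  set ε := 7 / (p * L ^ 2) with hε_def
  have hε : 0 < ε := by positivity
  have hρq : (1 - ε) * (1 - p) ≤ 1 := by nlinarith
  have h2pε : 2 * p * ε = 14 / L ^ 2 := by rw [hε_def]; field_simp; ring
  have hsq : ‖((1 - ε : ℝ) : ℂ) * exp (θ * I) - ((1 - p : ℝ) : ℂ)‖ ^ 2 ≤ p ^ 2 :=
    calc _ ≤ ((1 - ε) - (1 - p)) ^ 2 + θ ^ 2 := sq_norm_ofReal_mul_exp_sub_ofReal_le hρq θ
      _ ≤ p ^ 2 := by nlinarith [sq_seven_div_add_sq_le hLpos hpL hθ]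
  rw [norm_div, norm_real, Real.norm_of_nonneg hp0.le, div_le_one hp0]
  exact (pow_le_pow_iff_left₀ (norm_nonneg _) hp0.le two_ne_zero).1 hsq
end

section
/- Let f(z) = z^{m₀}(c₀ + c₁z + c₂z² + ...) be a complex polynomial with m₀ ≤ m, where m is sufficiently large, a = a(m) ∈ (0,1], |c₀| ≥ e^{-C₁ m^a}, and Σᵢ|cᵢ| ≤ e^{C₁ m^a}. Then for fixed p ∈ (0,1), q = 1-p, there exist w ∈ ℂ with |w| ≤ 1 and a constant C > 0 (depending on C₁, p) such that |f(pw + q)| ≥ exp(-C m^{(1+2a)/3}). -/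
/-!
By Jensen's inequality, the average of `log ‖g‖` over the circle of radius `R = 1 - L² / p`
is at least `log ‖g 0‖ ≥ -A`, while `log ‖g‖ ≤ A` on the unit disc. Hence the part of the
circle outside the arc `|θ| ≤ L` cannot carry much of the average, and some point of the arc
has `log ‖g‖ ≥ -2πA/L`. The arc lies in the disc of radius `p` about `1 - p`, and
`R ^ m₀ ≥ exp (-2 m L² / p)`. With `A = C₁ m ^ a`, the choice `L ≍ m ^ ((a - 1) / 3)` balances
`m L²` against `A / L`, both of order `m ^ ((1 + 2a) / 3)`; `L` is adjusted inside a range of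
this size so that the circle avoids the zeros of `g`.
-/

open Real Complex Polynomial

namespace Polynomial

lemma norm_eval_le_sum_norm_coeff {R : Type*} [NormedRing R] [NormOneClass R] (p : R[X]) {z : R}
    (hz : ‖z‖ ≤ 1) : ‖p.eval z‖ ≤ ∑ i ∈ Finset.range (p.natDegree + 1), ‖p.coeff i‖ := by
  rw [eval_eq_sum_range]
  refine (norm_sum_le _ _).trans (Finset.sum_le_sum fun i _ => ?_)
  calc ‖p.coeff i * z ^ i‖ ≤ ‖p.coeff i‖ * ‖z‖ ^ i := norm_mul_le_of_le le_rfl (norm_pow_le _ _)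
    _ ≤ ‖p.coeff i‖ := mul_le_of_le_one_right (norm_nonneg _) (pow_le_one₀ (norm_nonneg z) hz)

lemma log_norm_coeff_zero_le_logMahlerMeasure {p : ℂ[X]} (hp : p.coeff 0 ≠ 0) :
    Real.log ‖p.coeff 0‖ ≤ p.logMahlerMeasure := by
  rw [logMahlerMeasure_eq_log_MahlerMeasure]
  refine log_le_log (norm_pos_iff.2 hp) ?_
  simpa using norm_coeff_le_choose_mul_mahlerMeasure 0 p

lemma log_norm_coeff_zero_le_circleAverage {p : ℂ[X]} (hp : p.coeff 0 ≠ 0) (R : ℝ) :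
    Real.log ‖p.coeff 0‖ ≤ circleAverage (fun z => Real.log ‖p.eval z‖) 0 R := by
  have hcomp : (p.comp (C (R : ℂ) * X)).coeff 0 = p.coeff 0 := by
    simp [coeff_zero_eq_eval_zero, eval_comp]
  rw [circleAverage_eq_circleAverage_zero_one]
  have h := log_norm_coeff_zero_le_logMahlerMeasure (hcomp ▸ hp)
  rw [hcomp, logMahlerMeasure_def] at h
  simpa [eval_comp] using h

end Polynomial

lemma circleAverage_eq_smul_integral_neg_pi {E : Type*} [NormedAddCommGroup E] [NormedSpace ℝ E]
    (f : ℂ → E) (c : ℂ) (R : ℝ) :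
    circleAverage f c R = (2 * π)⁻¹ • ∫ θ in (-π)..π, f (circleMap c R θ) := by
  rw [circleAverage_eq_integral_add (-π),
    intervalIntegral.integral_comp_add_right (fun θ => f (circleMap c R θ))]
  congr 2 <;> ring

lemma exp_neg_two_mul_le_one_sub {t : ℝ} (ht0 : 0 ≤ t) (ht : t ≤ 1 / 2) :
    Real.exp (-(2 * t)) ≤ 1 - t := by
  have h := add_one_le_exp (2 * t)
  rw [Real.exp_neg, inv_le_comm₀ (exp_pos _) (by linarith)]
  refine le_trans ?_ h
  rw [inv_le_iff_one_le_mul₀ (by linarith)]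
  nlinarith

lemma exists_mem_Icc_sub_div_le_of_le_integral {F : ℝ → ℝ} {T L K μ : ℝ} (hF : Continuous F)
    (hL : 0 < L) (hLT : L ≤ T) (hFK : ∀ θ ∈ Set.Icc (-T) T, F θ ≤ K)
    (hμ : 2 * T * μ ≤ ∫ θ in (-T)..T, F θ) :
    ∃ θ ∈ Set.Icc (-L) L, K - T * (K - μ) / L ≤ F θ := by
  obtain ⟨θ, hθ, hmax⟩ := (isCompact_Icc (a := -L) (b := L)).exists_isMaxOn
    (Set.nonempty_Icc.2 (by linarith)) hF.continuousOn
  refine ⟨θ, hθ, ?_⟩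
  have hint : ∀ a b : ℝ, IntervalIntegrable F MeasureTheory.volume a b :=
    fun a b => hF.intervalIntegrable a b
  have h_arc : ∫ x in (-L)..L, F x ≤ 2 * L * F θ := by
    simpa [two_mul] using intervalIntegral.integral_mono_on (by linarith) (hint _ _)
      intervalIntegrable_const hmax
  have h_defect : ∫ x in (-L)..L, (K - F x) ≤ ∫ x in (-T)..T, (K - F x) :=
    intervalIntegral.integral_mono_interval (by linarith) (by linarith) hLT
      ((MeasureTheory.ae_restrict_mem measurableSet_Ioc).mono fun x hx =>
        sub_nonneg.2 (hFK x (Set.Ioc_subset_Icc_self hx)))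
      (intervalIntegrable_const.sub (hint _ _))
  rw [intervalIntegral.integral_sub intervalIntegrable_const (hint _ _),
    intervalIntegral.integral_sub intervalIntegrable_const (hint _ _),
    intervalIntegral.integral_const, intervalIntegral.integral_const, smul_eq_mul,
    smul_eq_mul] at h_defect
  have key : L * K - T * (K - μ) ≤ L * F θ := by linarith
  calc K - T * (K - μ) / L = (L * K - T * (K - μ)) / L := by field_simp
    _ ≤ F θ := by rw [div_le_iff₀ hL]; linarith

namespace Polynomial

lemma exists_mem_Icc_exp_le_norm_eval_circleMap {g : ℂ[X]} {R L A : ℝ} (hL : 0 < L)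
    (hLπ : L ≤ π) (hA : 0 ≤ A) (hne : ∀ θ, g.eval (circleMap 0 R θ) ≠ 0)
    (hup : ∀ θ, ‖g.eval (circleMap 0 R θ)‖ ≤ Real.exp A)
    (hlow : Real.exp (-A) ≤ ‖g.coeff 0‖) :
    ∃ θ ∈ Set.Icc (-L) L, Real.exp (-(2 * π * A / L)) ≤ ‖g.eval (circleMap 0 R θ)‖ := by
  set F : ℝ → ℝ := fun θ => Real.log ‖g.eval (circleMap 0 R θ)‖
  have hF : Continuous F :=
    ((g.continuous.comp (continuous_circleMap 0 R)).norm.log fun θ => norm_ne_zero_iff.2 (hne θ))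
  have hFA : ∀ θ ∈ Set.Icc (-π) π, F θ ≤ A := fun θ _ =>
    (Real.log_le_iff_le_exp (norm_pos_iff.2 (hne θ))).2 (hup θ)
  have hg0 : g.coeff 0 ≠ 0 := norm_pos_iff.1 ((Real.exp_pos _).trans_le hlow)
  have hmean : 2 * π * -A ≤ ∫ θ in (-π)..π, F θ := by
    have h := (Real.le_log_iff_exp_le (norm_pos_iff.2 hg0)).2 hlow |>.trans
      (log_norm_coeff_zero_le_circleAverage hg0 R)
    rw [circleAverage_eq_smul_integral_neg_pi, smul_eq_mul] at h
    rwa [le_inv_mul_iff₀ (by positivity)] at h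
  obtain ⟨θ, hθ, hFθ⟩ := exists_mem_Icc_sub_div_le_of_le_integral hF hL hLπ hFA hmean
  refine ⟨θ, hθ, (Real.le_log_iff_exp_le (norm_pos_iff.2 (hne θ))).1 (le_trans ?_ hFθ)⟩
  rw [show π * (A - -A) / L = 2 * π * A / L by ring]
  linarith

end Polynomial

lemma norm_circleMap_sub_le {p t θ : ℝ} (hp : p ≤ 1) (ht : 0 ≤ t) (htp : t ≤ p)
    (hθ : θ ^ 2 ≤ p * t) : ‖circleMap 0 (1 - t) θ - ((1 - p : ℝ) : ℂ)‖ ≤ p := by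
  have hsq : ‖circleMap 0 (1 - t) θ - ((1 - p : ℝ) : ℂ)‖ ^ 2
      = (p - t) ^ 2 + 2 * (1 - t) * (1 - p) * (1 - Real.cos θ) := by
    rw [Complex.sq_norm, Complex.normSq_apply, circleMap_zero]
    simp only [Complex.sub_re, Complex.sub_im, Complex.mul_re, Complex.mul_im,
      Complex.ofReal_re, Complex.ofReal_im, Complex.exp_ofReal_mul_I_re,
      Complex.exp_ofReal_mul_I_im]
    linear_combination (1 - t) ^ 2 * Real.sin_sq_add_cos_sq θ
  have hcos : 1 - Real.cos θ ≤ θ ^ 2 / 2 := by linarith [Real.one_sub_sq_div_two_le_cos (x := θ)]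
  have hRq : 0 ≤ (1 - t) * (1 - p) := mul_nonneg (by linarith) (by linarith)
  have hRq1 : (1 - t) * (1 - p) ≤ 1 := by nlinarith
  refine (pow_le_pow_iff_left₀ (norm_nonneg _) (ht.trans htp) two_ne_zero).1 ?_
  rw [hsq]
  nlinarith [mul_le_mul_of_nonneg_left hcos hRq]

namespace Polynomial

lemma exists_mem_Ioc_forall_mem_roots_norm_ne (g : ℂ[X]) {p a b : ℝ} (hp : 0 < p) (ha : 0 ≤ a)
    (hab : a < b) : ∃ L ∈ Set.Ioc a b, ∀ z ∈ g.roots, ‖z‖ ≠ 1 - L ^ 2 / p := by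
  have hinj : Set.InjOn (fun L : ℝ => 1 - L ^ 2 / p) (Set.Ioc a b) := by
    intro x hx y hy hxy
    have hsq : x ^ 2 = y ^ 2 := by
      field_simp at hxy
      linarith
    exact (pow_left_inj₀ (ha.trans hx.1.le) (ha.trans hy.1.le) two_ne_zero).1 hsq
  obtain ⟨_, ⟨L, hL, rfl⟩, hL_notMem⟩ :=
    ((Set.Ioc_infinite hab).image hinj).exists_notMem_finset (g.roots.toFinset.image (‖·‖))
  exact ⟨L, hL, fun z hz h => hL_notMem (Finset.mem_image.2 ⟨z, Multiset.mem_toFinset.2 hz, h⟩)⟩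

theorem exists_norm_le_one_exp_le_norm_eval_X_pow_mul {g : ℂ[X]} {p A L : ℝ} {m₀ m : ℕ}
    (hp0 : 0 < p) (hp1 : p ≤ 1) (hA : 0 ≤ A) (hL0 : 0 < L) (hLp : L ≤ p / 2) (hm₀ : m₀ ≤ m)
    (hlow : Real.exp (-A) ≤ ‖g.coeff 0‖) (hup : ∀ z : ℂ, ‖z‖ ≤ 1 → ‖g.eval z‖ ≤ Real.exp A)
    (hroots : ∀ z ∈ g.roots, ‖z‖ ≠ 1 - L ^ 2 / p) :
    ∃ w : ℂ, ‖w‖ ≤ 1 ∧ Real.exp (-(2 * (L ^ 2 / p) * m + 2 * π * A / L)) ≤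
      ‖(X ^ m₀ * g).eval ((p : ℂ) * w + ((1 - p : ℝ) : ℂ))‖ := by
  set t := L ^ 2 / p with ht
  have ht0 : 0 < t := by positivity
  have htp : t ≤ p / 4 := by rw [ht, div_le_iff₀ hp0]; nlinarith
  have hR : 0 < 1 - t := by linarith
  have hg : g ≠ 0 := by
    rintro rfl
    simpa using (Real.exp_pos _).trans_le hlow
  have hnorm : ∀ θ, ‖circleMap 0 (1 - t) θ‖ = 1 - t := fun θ => by
    rw [norm_circleMap_zero, abs_of_pos hR]
  have hne : ∀ θ, g.eval (circleMap 0 (1 - t) θ) ≠ 0 := fun θ h =>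
    hroots _ ((mem_roots hg).2 h) (hnorm θ)
  obtain ⟨θ, hθ, hgθ⟩ := exists_mem_Icc_exp_le_norm_eval_circleMap hL0
    (by linarith [pi_gt_three]) hA hne (fun θ => hup _ (by rw [hnorm]; linarith)) hlow
  refine ⟨(circleMap 0 (1 - t) θ - ((1 - p : ℝ) : ℂ)) / p, ?_, ?_⟩
  · rw [norm_div, Complex.norm_real, Real.norm_of_nonneg hp0.le, div_le_one hp0]
    refine norm_circleMap_sub_le hp1 ht0.le (by linarith) ?_
    rw [ht, mul_div_cancel₀ _ hp0.ne']
    exact sq_le_sq' hθ.1 hθ.2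
  · rw [mul_div_cancel₀ _ (Complex.ofReal_ne_zero.2 hp0.ne'), sub_add_cancel, eval_mul,
      eval_pow, eval_X, norm_mul, norm_pow, hnorm]
    have hRpow : Real.exp (-(2 * t)) ^ m ≤ (1 - t) ^ m₀ :=
      (pow_le_pow_left₀ (Real.exp_pos _).le
        (exp_neg_two_mul_le_one_sub ht0.le (by linarith)) m).trans
        (pow_le_pow_of_le_one hR.le (by linarith) hm₀)
    calc Real.exp (-(2 * t * m + 2 * π * A / L))
        = Real.exp (-(2 * t)) ^ m * Real.exp (-(2 * π * A / L)) := by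
          rw [← Real.exp_nat_mul, ← Real.exp_add]
          ring_nf
      _ ≤ (1 - t) ^ m₀ * ‖g.eval (circleMap 0 (1 - t) θ)‖ :=
          mul_le_mul hRpow hgθ (Real.exp_pos _).le (pow_nonneg hR.le _)

end Polynomial

lemma exponent_le_mul_rpow {m a p C₁ L : ℝ} (hm : 1 ≤ m) (hp0 : 0 < p) (hp1 : p ≤ 1)
    (hC₁ : 0 ≤ C₁) (hL : L ∈ Set.Ioc (p / 4 * m ^ ((a - 1) / 3)) (p / 2 * m ^ ((a - 1) / 3))) :
    2 * (L ^ 2 / p) * m + 2 * π * (C₁ * m ^ a) / L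
      ≤ (1 + 8 * π * C₁ / p) * m ^ ((1 + 2 * a) / 3) := by
  obtain ⟨hL₁, hL₂⟩ := hL
  have hm0 : 0 < m := by linarith
  set s := m ^ ((a - 1) / 3) with hs
  set B := m ^ ((1 + 2 * a) / 3) with hB
  have hs0 : 0 < s := rpow_pos_of_pos hm0 _
  have hL0 : 0 < L := lt_of_lt_of_le' hL₁ (by positivity)
  have hsB : s ^ 2 * m = B := by
    rw [hs, hB, ← rpow_natCast, ← rpow_mul hm0.le, ← rpow_add_one hm0.ne']
    congr 1
    ring
  have hma : m ^ a = s * B := by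
    rw [hs, hB, ← rpow_add hm0]
    congr 1
    ring
  have h_radial : 2 * (L ^ 2 / p) * m ≤ B := by
    have hLsq : L ^ 2 ≤ (p / 2 * s) ^ 2 := pow_le_pow_left₀ hL0.le hL₂ 2
    calc 2 * (L ^ 2 / p) * m ≤ 2 * ((p / 2 * s) ^ 2 / p) * m := by gcongr
      _ = p / 2 * (s ^ 2 * m) := by field_simp
      _ ≤ B := by
        rw [hsB]
        have : 0 ≤ B := by positivity
        nlinarith
  have h_arc : 2 * π * (C₁ * m ^ a) / L ≤ 8 * π * C₁ / p * B := by
    rw [div_le_iff₀ hL0, hma]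
    have : 0 ≤ B := by positivity
    calc 2 * π * (C₁ * (s * B)) = 8 * π * C₁ / p * B * (p / 4 * s) := by field_simp; ring
      _ ≤ 8 * π * C₁ / p * B * L := by gcongr
  linarith

/-- Polynomial lower bound lemma: if `f = z^{m₀}·g` with `m₀ ≤ m`, `a ∈ (0,1]`,
`|g(0)| ≥ e^{-C₁ m^a}` and the sum of moduli of coefficients of `g` at most `e^{C₁ m^a}`,
then for some `w` with `|w| ≤ 1` one has `|f(pw+q)| ≥ exp(-C m^{(1+2a)/3})`,
with `C` depending only on `C₁` and `p`, provided `m` is sufficiently large. -/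
theorem stmt_2 (p C₁ : ℝ) (hp0 : 0 < p) (hp1 : p < 1) (hC₁ : 0 < C₁) :
    ∃ C : ℝ, 0 < C ∧ ∃ M : ℕ, ∀ m : ℕ, M ≤ m → ∀ a : ℝ, 0 < a → a ≤ 1 →
      ∀ m₀ : ℕ, m₀ ≤ m → ∀ g : Polynomial ℂ,
        Real.exp (-C₁ * (m : ℝ) ^ a) ≤ ‖g.coeff 0‖ →
        (∑ i ∈ Finset.range (g.natDegree + 1), ‖g.coeff i‖) ≤ Real.exp (C₁ * (m : ℝ) ^ a) →
        ∃ w : ℂ, ‖w‖ ≤ 1 ∧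
          Real.exp (-C * (m : ℝ) ^ ((1 + 2 * a) / 3)) ≤
            ‖(Polynomial.X ^ m₀ * g).eval ((p : ℂ) * w + ((1 - p : ℝ) : ℂ))‖ := by
  refine ⟨1 + 8 * π * C₁ / p, by positivity, 1, fun m hm a _ ha1 m₀ hm₀ g hlow hsum => ?_⟩
  have hm1 : (1 : ℝ) ≤ m := by exact_mod_cast hm
  have hs0 : 0 < (m : ℝ) ^ ((a - 1) / 3) := rpow_pos_of_pos (by linarith) _
  have hs1 : (m : ℝ) ^ ((a - 1) / 3) ≤ 1 := rpow_le_one_of_one_le_of_nonpos hm1 (by linarith)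
  obtain ⟨L, hL, hroots⟩ := g.exists_mem_Ioc_forall_mem_roots_norm_ne hp0
    (by positivity : 0 ≤ p / 4 * (m : ℝ) ^ ((a - 1) / 3))
    (by nlinarith : p / 4 * (m : ℝ) ^ ((a - 1) / 3) < p / 2 * (m : ℝ) ^ ((a - 1) / 3))
  obtain ⟨w, hw, hfw⟩ := exists_norm_le_one_exp_le_norm_eval_X_pow_mul hp0 hp1.le
    (by positivity : 0 ≤ C₁ * (m : ℝ) ^ a) (lt_of_lt_of_le' hL.1 (by positivity))
    (hL.2.trans (by nlinarith)) hm₀ (by rwa [← neg_mul])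
    (fun z hz => (g.norm_eval_le_sum_norm_coeff hz).trans hsum) hroots
  refine ⟨w, hw, le_trans (Real.exp_le_exp.2 ?_) hfw⟩
  rw [neg_mul, neg_le_neg_iff]
  exact exponent_le_mul_rpow hm1 hp0 hp1.le hC₁.le hL
end

section
/- Let h(z₁,...,z_d) = Σ_{k ∈ [n]^d} c_k z₁^{k₁}···z_d^{k_d} be a nonzero polynomial with all coefficients c_k ∈ {0, ±1}, which is n^μ-sparse for some μ ∈ [0,1). Then for any Δ ≥ 1 and any L with 1 ≤ L ≤ n^Δ, there exist z₁,...,z_d ∈ γ(L) such that |h(z₁,...,z_d)| ≥ exp(-C Δ L n^{1-μ} log n), where C depends only on d and μ. -/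
/-!
Substituting `z_i = e^{iθ n^i}` (Kronecker) turns `h` into a one-variable exponential sum
`∑ c_k e^{iλ_k θ}` with distinct integer frequencies `λ_k = ∑ k_i n^i < n^d`. Each sign class of
coefficients is `n^μ`-separated in the coordinate `j`, so there are at most `N ≤ 4 n^{1-μ}`
terms. A Turán-type lemma finds `θ ∈ [0, π/(L n^d)]` with `|h(z)| ≥ (L n^d N)^{-(N-1)}`: it is
proved by finite differencing, where a step of size at most `η = π/(L n^d N)` removes one
frequency and costs a factor `η/π`. Every `θ n^i` then lies in `[0, π/L]`, and
`log (L n^d N) ≤ (d + 4) Δ log n` gives the constant.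
-/

open Real Complex Finset

lemma norm_exp_intCast_mul_ofReal_mul_I (k : ℤ) (θ : ℝ) : ‖cexp (k * θ * I)‖ = 1 := by
  simpa using norm_exp_ofReal_mul_I (k * θ)

lemma two_mul_abs_div_pi_le_norm_exp_mul_I_sub_one {x : ℝ} (hx : |x| ≤ π) :
    2 * |x| / π ≤ ‖cexp (x * I) - 1‖ := by
  have hπ := pi_pos
  have hsin : 2 / π * (|x| / 2) ≤ Real.sin (|x| / 2) :=
    mul_le_sin (by positivity) (by linarith)
  rw [mul_comm (x : ℂ), norm_exp_I_mul_ofReal_sub_one, norm_mul, Real.norm_eq_abs,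
    Real.norm_eq_abs, abs_two,
    Real.abs_sin_eq_sin_abs_of_abs_le_pi (by rw [abs_div, abs_two]; linarith), abs_div, abs_two]
  calc 2 * |x| / π = 2 * (2 / π * (|x| / 2)) := by ring
    _ ≤ _ := by gcongr

lemma exists_mem_Ioc_norm_exp_mul_I_sub_one_ge {Λ : ℤ} (hΛ : Λ ≠ 0) {η : ℝ} (hη : 0 < η)
    (hηπ : η ≤ π) : ∃ h ∈ Set.Ioc 0 η, 2 * η / π ≤ ‖cexp (Λ * h * I) - 1‖ := by
  have hΛ1 : (1 : ℝ) ≤ |(Λ : ℝ)| := by exact_mod_cast Int.one_le_abs hΛ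
  -- `|Λ h|` lands in `[η, π]`, where Jordan's inequality applies
  refine ⟨min η (π / |(Λ : ℝ)|), ⟨lt_min hη (by positivity), min_le_left _ _⟩, ?_⟩
  have hx : |(Λ : ℝ) * min η (π / |(Λ : ℝ)|)| = min (|(Λ : ℝ)| * η) π := by
    rw [abs_mul, abs_of_pos (lt_min hη (by positivity)), mul_min_of_nonneg _ _ (abs_nonneg _),
      mul_div_cancel₀ _ (by positivity)]
  calc 2 * η / π ≤ 2 * |(Λ : ℝ) * min η (π / |(Λ : ℝ)|)| / π := by
        rw [hx]; gcongr; exact le_min (by nlinarith) hηπ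
    _ ≤ _ := by
        have := two_mul_abs_div_pi_le_norm_exp_mul_I_sub_one (hx ▸ min_le_right _ _)
        push_cast at this
        exact this

section ExpSum

variable {ι : Type*} (lam : ι → ℤ)

noncomputable def expSum (S : Finset ι) (a : ι → ℂ) (θ : ℝ) : ℂ :=
  ∑ m ∈ S, a m * cexp (lam m * θ * I)

lemma expSum_mul_exp_sub_exp (S : Finset ι) (a : ι → ℂ) (m₁ : ι) (h θ : ℝ) :
    expSum lam S (fun m => a m * (cexp (lam m * h * I) - cexp (lam m₁ * h * I))) θ =
      expSum lam S a (θ + h) - cexp (lam m₁ * h * I) * expSum lam S a θ := by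
  simp only [expSum, Finset.mul_sum, ← Finset.sum_sub_distrib]
  refine Finset.sum_congr rfl fun m _ => ?_
  rw [show (lam m : ℂ) * ↑(θ + h) * I = lam m * θ * I + lam m * h * I by push_cast; ring,
    Complex.exp_add]
  ring

variable [DecidableEq ι] {S : Finset ι} {N : ℕ}

theorem exists_mem_Icc_norm_expSum_ge {η : ℝ} (hη : 0 < η) (hηπ : η ≤ π) (hS : #S = N + 1)
    (hinj : Set.InjOn lam S) (a : ι → ℂ) {m₀ : ι} (hm₀ : m₀ ∈ S) (t : ℝ) :
    ∃ θ ∈ Set.Icc t (t + N * η), ‖a m₀‖ * (η / π) ^ N ≤ ‖expSum lam S a θ‖ := by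
  induction N generalizing S a t with
  | zero =>
    obtain ⟨m, rfl⟩ := Finset.card_eq_one.mp hS
    rw [Finset.mem_singleton.mp hm₀]
    refine ⟨t, by simp, ?_⟩
    simp [expSum, norm_exp_intCast_mul_ofReal_mul_I]
  | succ N ih =>
    obtain ⟨m₁, hm₁, hm₁₀⟩ := Finset.exists_mem_ne (by omega : 1 < #S) m₀
    have hΛ : lam m₀ - lam m₁ ≠ 0 := sub_ne_zero.mpr fun h => hm₁₀ (hinj hm₁ hm₀ h.symm)
    obtain ⟨h, ⟨hh0, hhη⟩, hgain⟩ := exists_mem_Ioc_norm_exp_mul_I_sub_one_ge hΛ hη hηπ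
    set u := cexp (lam m₁ * h * I)
    -- the coefficients of `θ ↦ expSum lam S a (θ + h) - u * expSum lam S a θ`
    set a' : ι → ℂ := fun m => a m * (cexp (lam m * h * I) - u)
    have hu : ‖u‖ = 1 := norm_exp_intCast_mul_ofReal_mul_I _ _
    have ha'm₁ : a' m₁ = 0 := by simp [a', u]
    have ha'm₀ : ‖a m₀‖ * (2 * η / π) ≤ ‖a' m₀‖ := by
      have : cexp (lam m₀ * h * I) - u = u * (cexp (↑(lam m₀ - lam m₁) * h * I) - 1) := by
        rw [mul_sub, mul_one, ← Complex.exp_add]; push_cast; ring_nf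
      rw [norm_mul, this, norm_mul, hu, one_mul]
      gcongr
    obtain ⟨θ, ⟨hθt, hθη⟩, hθ⟩ := ih (S := S.erase m₁) (by rw [card_erase_of_mem hm₁, hS]; rfl)
      (hinj.mono (by simp)) a' (mem_erase.mpr ⟨hm₁₀.symm, hm₀⟩) t
    have hdiff : ‖a m₀‖ * (η / π) ^ (N + 1) * 2 ≤
        ‖expSum lam S a (θ + h)‖ + ‖expSum lam S a θ‖ := by
      calc ‖a m₀‖ * (η / π) ^ (N + 1) * 2 = ‖a m₀‖ * (2 * η / π) * (η / π) ^ N := by ring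
        _ ≤ ‖a' m₀‖ * (η / π) ^ N := by gcongr
        _ ≤ ‖expSum lam S a' θ‖ := by
            rwa [expSum, ← Finset.sum_erase S (by rw [ha'm₁, zero_mul])]
        _ = ‖expSum lam S a (θ + h) - u * expSum lam S a θ‖ := by
            rw [expSum_mul_exp_sub_exp]
        _ ≤ ‖expSum lam S a (θ + h)‖ + ‖expSum lam S a θ‖ := by
            grw [norm_sub_le, norm_mul, hu, one_mul]
    push_cast
    rcases le_total ‖expSum lam S a θ‖ ‖expSum lam S a (θ + h)‖ with hle | hle
    · exact ⟨θ + h, ⟨by linarith, by linarith⟩, by linarith⟩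
    · exact ⟨θ, ⟨hθt, by linarith⟩, by linarith⟩

theorem exists_mem_Icc_zero_norm_expSum_ge (hS : #S = N + 1) (hinj : Set.InjOn lam S)
    (a : ι → ℂ) {m₀ : ι} (hm₀ : m₀ ∈ S) {R : ℝ} (hR : 1 ≤ R) :
    ∃ θ ∈ Set.Icc 0 (π / R), ‖a m₀‖ * (1 / (R * (N + 1))) ^ N ≤ ‖expSum lam S a θ‖ := by
  have hRN : 1 ≤ R * (N + 1) :=
    one_le_mul_of_one_le_of_one_le hR (by linarith [N.cast_nonneg (α := ℝ)])
  obtain ⟨θ, ⟨hθ0, hθN⟩, hθ⟩ := exists_mem_Icc_norm_expSum_ge lam (η := π / (R * (N + 1)))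
    (by positivity) (div_le_self pi_pos.le hRN) hS hinj a hm₀ 0
  refine ⟨θ, ⟨hθ0, hθN.trans ?_⟩, by rwa [div_div_cancel_left' pi_ne_zero, ← one_div] at hθ⟩
  rw [zero_add, mul_div, div_le_div_iff₀ (by positivity) (by positivity)]
  nlinarith [pi_pos, (by linarith : (0 : ℝ) < R)]

end ExpSum

lemma card_le_div_add_one_of_separated {n : ℕ} {s : ℝ} (hs : 0 < s) {T : Finset ℕ}
    (hT : ∀ t ∈ T, t < n) (hsep : ∀ t ∈ T, ∀ t' ∈ T, t ≠ t' → s ≤ |(t : ℝ) - t'|) :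
    (#T : ℝ) ≤ n / s + 1 := by
  have hinj : Set.InjOn (fun t : ℕ => ⌊(t : ℝ) / s⌋₊) T := by
    intro t ht t' ht' hfloor
    by_contra hne
    have hclose : |(t : ℝ) / s - t' / s| < 1 := by
      refine Int.abs_sub_lt_one_of_floor_eq_floor ?_
      rw [← Int.natCast_floor_eq_floor (by positivity),
        ← Int.natCast_floor_eq_floor (by positivity)]
      exact congrArg _ hfloor
    rw [← sub_div, abs_div, abs_of_pos hs, div_lt_one hs] at hclose
    exact (hsep t ht t' ht' hne).not_gt hclose
  have hmaps : Set.MapsTo (fun t : ℕ => ⌊(t : ℝ) / s⌋₊) T (range (⌊(n : ℝ) / s⌋₊ + 1)) := by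
    intro t ht
    simp only [coe_range, Set.mem_Iio, Nat.lt_succ_iff]
    gcongr
    exact_mod_cast (hT t ht).le
  have hcard := card_le_card_of_injOn _ hmaps hinj
  rw [card_range] at hcard
  calc (#T : ℝ) ≤ (⌊(n : ℝ) / s⌋₊ + 1 : ℕ) := by exact_mod_cast hcard
    _ ≤ n / s + 1 := by push_cast; gcongr; exact Nat.floor_le (by positivity)

section SparseCount

variable {α : Type*} [Fintype α] {n : ℕ} {c : α → ℤ} {p : α → Fin n} {s : ℝ}

lemma card_filter_eq_le_div_add_one (hs : 0 < s)
    (hsep : ∀ k k', c k ≠ 0 → c k = c k' → k ≠ k' → s ≤ |((p k : ℕ) : ℝ) - ((p k' : ℕ) : ℝ)|)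
    {v : ℤ} (hv : v ≠ 0) : (#{k | c k = v} : ℝ) ≤ n / s + 1 := by
  have hsep' : ∀ k ∈ ({k | c k = v} : Finset α), ∀ k' ∈ ({k | c k = v} : Finset α), k ≠ k' →
      s ≤ |((p k : ℕ) : ℝ) - ((p k' : ℕ) : ℝ)| := by
    intro k hk k' hk' hne
    simp only [mem_filter, mem_univ, true_and] at hk hk'
    exact hsep k k' (hk ▸ hv) (hk.trans hk'.symm) hne
  have hinj : Set.InjOn (fun k => (p k : ℕ)) ({k | c k = v} : Finset α) := by
    intro k hk k' hk' hpk
    by_contra hne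
    have := hsep' k hk k' hk' hne
    simp only at hpk
    rw [hpk, sub_self, abs_zero] at this
    exact this.not_gt hs
  rw [← card_image_of_injOn hinj]
  refine card_le_div_add_one_of_separated hs (by simp) ?_
  simp only [mem_image]
  rintro _ ⟨k, hk, rfl⟩ _ ⟨k', hk', rfl⟩ hne
  exact hsep' k hk k' hk' (fun h => hne (h ▸ rfl))

lemma card_support_le (hs : 0 < s) (hc : ∀ k, c k = 0 ∨ c k = 1 ∨ c k = -1)
    (hsep : ∀ k k', c k ≠ 0 → c k = c k' → k ≠ k' → s ≤ |((p k : ℕ) : ℝ) - ((p k' : ℕ) : ℝ)|) :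
    (#{k | c k ≠ 0} : ℝ) ≤ 2 * (n / s + 1) := by
  classical
  have hsub : ({k | c k ≠ 0} : Finset α) ⊆
      ({k | c k = 1} : Finset α) ∪ ({k | c k = -1} : Finset α) := by
    intro k
    simp only [mem_filter, mem_univ, true_and, mem_union]
    rcases hc k with h | h | h <;> simp [h]
  calc (#{k | c k ≠ 0} : ℝ) ≤ #{k | c k = 1} + #{k | c k = -1} := by
        exact_mod_cast (card_le_card hsub).trans (card_union_le _ _)
    _ ≤ 2 * (n / s + 1) := by
        linarith [card_filter_eq_le_div_add_one hs hsep one_ne_zero,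
          card_filter_eq_le_div_add_one hs hsep (neg_ne_zero.mpr one_ne_zero)]

lemma card_support_le_four_mul_rpow (hn : (1 : ℝ) ≤ n) {μ : ℝ} (hμ : μ ≤ 1)
    (hc : ∀ k, c k = 0 ∨ c k = 1 ∨ c k = -1)
    (hsep : ∀ k k', c k ≠ 0 → c k = c k' → k ≠ k' →
      (n : ℝ) ^ μ ≤ |((p k : ℕ) : ℝ) - ((p k' : ℕ) : ℝ)|) :
    (#{k | c k ≠ 0} : ℝ) ≤ 4 * n ^ (1 - μ) := by
  have h := card_support_le (by positivity) hc hsep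
  rw [show (n : ℝ) / n ^ μ = n ^ (1 - μ) by rw [rpow_sub (by positivity), rpow_one]] at h
  linarith [one_le_rpow hn (by linarith : 0 ≤ 1 - μ)]

end SparseCount

lemma prod_exp_mul_pow_eq_exp {d n : ℕ} (θ : ℝ) (k : Fin d → Fin n) :
    ∏ i, cexp (↑(θ * n ^ (i : ℕ)) * I) ^ (k i : ℕ) =
      cexp ((((finFunctionFinEquiv k : ℕ) : ℤ) : ℂ) * θ * I) := by
  simp_rw [← Complex.exp_nat_mul, ← Complex.exp_sum, finFunctionFinEquiv_apply]
  congr 1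
  push_cast
  rw [Finset.sum_mul, Finset.sum_mul]
  exact sum_congr rfl fun i _ => by ring

lemma sum_mul_prod_exp_pow_eq_expSum {d n : ℕ} (c : (Fin d → Fin n) → ℂ) (θ : ℝ) :
    ∑ k, c k * ∏ i, cexp (↑(θ * n ^ (i : ℕ)) * I) ^ (k i : ℕ) =
      expSum (fun k => (finFunctionFinEquiv k : ℕ)) ({k | c k ≠ 0} : Finset _) c θ := by
  simp_rw [prod_exp_mul_pow_eq_exp]
  rw [expSum, sum_filter_of_ne]
  exact fun k _ hk hck => hk (by simp [hck])

lemma log_mul_pow_mul_le {d n N : ℕ} {Δ L : ℝ} (hn : 2 ≤ n) (hΔ : 1 ≤ Δ) (hL : 0 < L)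
    (hLn : L ≤ n ^ Δ) (hN : (N + 1 : ℝ) ≤ 4 * n) :
    Real.log (L * n ^ d * (N + 1)) ≤ (d + 4) * Δ * Real.log n := by
  have hn2 : (2 : ℝ) ≤ n := by exact_mod_cast hn
  have hn0 : (0 : ℝ) < n := by linarith
  have hlog : 0 ≤ Real.log n := log_nonneg (by linarith)
  have hbound : L * n ^ d * (N + 1) ≤ (n : ℝ) ^ (Δ + d + 3) := by
    rw [rpow_add hn0, rpow_add hn0, rpow_natCast, show (3 : ℝ) = (3 : ℕ) by norm_num,
      rpow_natCast]
    calc L * n ^ d * (N + 1) ≤ n ^ Δ * n ^ d * (4 * n) := by gcongr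
      _ ≤ n ^ Δ * n ^ d * n ^ 3 := by gcongr; nlinarith [mul_le_mul hn2 hn2 zero_le_two hn0.le]
  calc Real.log (L * n ^ d * (N + 1)) ≤ Real.log ((n : ℝ) ^ (Δ + d + 3)) :=
        log_le_log (by positivity) hbound
    _ = (Δ + d + 3) * Real.log n := log_rpow hn0 _
    _ ≤ (d + 4) * Δ * Real.log n := by
        have : (0 : ℝ) ≤ (d + 3) * (Δ - 1) := mul_nonneg (by positivity) (by linarith)
        nlinarith [mul_nonneg this hlog]

lemma exp_neg_le_one_div_pow {d n N : ℕ} {μ Δ L : ℝ} (hn : 2 ≤ n) (hμ0 : 0 ≤ μ) (hΔ : 1 ≤ Δ)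
    (hL : 1 ≤ L) (hLn : L ≤ n ^ Δ) (hN : (N + 1 : ℝ) ≤ 4 * n ^ (1 - μ)) :
    Real.exp (-(4 * d + 16) * Δ * L * n ^ (1 - μ) * Real.log n) ≤
      (1 / (L * n ^ d * (N + 1))) ^ N := by
  have hn1 : (1 : ℝ) ≤ n := by exact_mod_cast (by omega : 1 ≤ n)
  have hrpow : (n : ℝ) ^ (1 - μ) ≤ n := by
    simpa using rpow_le_rpow_of_exponent_le hn1 (by linarith : 1 - μ ≤ 1)
  have hB : 1 ≤ L * n ^ d * (N + 1) := one_le_mul_of_one_le_of_one_le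
    (one_le_mul_of_one_le_of_one_le hL (one_le_pow₀ hn1)) (by linarith [N.cast_nonneg (α := ℝ)])
  have hlogB := log_mul_pow_mul_le (d := d) hn hΔ (by linarith) hLn (by linarith)
  have hN' : (N : ℝ) ≤ 4 * L * n ^ (1 - μ) := by
    nlinarith [rpow_nonneg (Nat.cast_nonneg n) (1 - μ)]
  rw [one_div, inv_pow, ← Real.exp_log (by positivity : (0 : ℝ) < _ ^ N), ← Real.exp_neg,
    Real.exp_le_exp, log_pow]
  have hprod : (N : ℝ) * Real.log (L * n ^ d * (N + 1)) ≤
      (4 * L * n ^ (1 - μ)) * ((d + 4) * Δ * Real.log n) :=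
    mul_le_mul hN' hlogB (log_nonneg hB) (by positivity)
  linarith

theorem stmt_4_general (d : ℕ) (μ : ℝ) (hμ0 : 0 ≤ μ) (hμ1 : μ < 1) :
    ∃ C : ℝ, 0 < C ∧ ∀ n : ℕ, 2 ≤ n → ∀ c : (Fin d → Fin n) → ℤ,
      (∀ k, c k = 0 ∨ c k = 1 ∨ c k = -1) →
      (∃ k, c k ≠ 0) →
      (∃ j : Fin d, ∀ k k' : Fin d → Fin n, c k ≠ 0 → c k = c k' → k ≠ k' →
        (n : ℝ) ^ μ ≤ |((k j : ℕ) : ℝ) - ((k' j : ℕ) : ℝ)|) →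
      ∀ Δ L : ℝ, 1 ≤ Δ → 1 ≤ L → L ≤ (n : ℝ) ^ Δ →
        ∃ z : Fin d → ℂ,
          (∀ i, ∃ θ : ℝ, |θ| ≤ π / L ∧ z i = Complex.exp (θ * Complex.I)) ∧
          Real.exp (-C * Δ * L * (n : ℝ) ^ (1 - μ) * Real.log n) ≤
            ‖∑ k : Fin d → Fin n, (c k : ℂ) * ∏ i, z i ^ (k i : ℕ)‖ := by
  classical
  refine ⟨4 * d + 16, by positivity, ?_⟩
  rintro n hn c hc ⟨k₀, hk₀⟩ ⟨j, hsep⟩ Δ L hΔ hL hLn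
  have hn1 : (1 : ℝ) ≤ n := by exact_mod_cast (by omega : 1 ≤ n)
  set S : Finset (Fin d → Fin n) := {k | (c k : ℂ) ≠ 0}
  have hk₀S : k₀ ∈ S := by simp [S, hk₀]
  obtain ⟨N, hSN⟩ := Nat.exists_eq_add_one.mpr (card_pos.mpr ⟨k₀, hk₀S⟩)
  have hN : (N + 1 : ℝ) ≤ 4 * n ^ (1 - μ) := by
    have hS : S = ({k | c k ≠ 0} : Finset _) := by simp [S]
    rw [← Nat.cast_add_one, ← hSN, hS]
    exact card_support_le_four_mul_rpow (p := fun k => k j) hn1 hμ1.le hc hsep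
  have hinj : Set.InjOn (fun k : Fin d → Fin n => ((finFunctionFinEquiv k : ℕ) : ℤ)) S :=
    fun k _ k' _ h => finFunctionFinEquiv.injective (Fin.ext (Int.natCast_inj.mp h))
  obtain ⟨θ, ⟨hθ0, hθ⟩, hbound⟩ := exists_mem_Icc_zero_norm_expSum_ge _ hSN hinj
    (fun k => c k) hk₀S (one_le_mul_of_one_le_of_one_le hL (one_le_pow₀ hn1))
  refine ⟨fun i => cexp (↑(θ * n ^ (i : ℕ)) * I), fun i => ⟨_, ?_, rfl⟩, ?_⟩
  · rw [abs_of_nonneg (by positivity)]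
    calc θ * n ^ (i : ℕ) ≤ π / (L * n ^ d) * n ^ d := by gcongr; exact i.is_le'
      _ = π / L := by field_simp
  · have hc₀ : ‖(c k₀ : ℂ)‖ = 1 := by
      rcases hc k₀ with h | h | h
      exacts [absurd h hk₀, by simp [h], by simp [h]]
    rw [sum_mul_prod_exp_pow_eq_expSum]
    calc Real.exp (-(4 * d + 16) * Δ * L * n ^ (1 - μ) * Real.log n)
        ≤ (1 / (L * n ^ d * (N + 1))) ^ N := exp_neg_le_one_div_pow hn hμ0 hΔ hL hLn hN
      _ = ‖(c k₀ : ℂ)‖ * (1 / (L * n ^ d * (N + 1))) ^ N := by rw [hc₀, one_mul]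
      _ ≤ _ := hbound

/-- Multivariate sparse Littlewood-type bound (Theorem 2): if
`h(z₁,…,z_d) = Σ_{k ∈ [n]^d} c_k z₁^{k₁}⋯z_d^{k_d}` is nonzero, has coefficients in
`{0,±1}` and is `n^μ`-sparse, then for any `Δ ≥ 1` and `1 ≤ L ≤ n^Δ` there is a point
with each coordinate in `γ(L)` where `|h| ≥ exp(-C Δ L n^{1-μ} log n)`. -/
theorem stmt_4 (d : ℕ) (hd : 1 ≤ d) (μ : ℝ) (hμ0 : 0 ≤ μ) (hμ1 : μ < 1) :
    ∃ C : ℝ, 0 < C ∧ ∀ n : ℕ, 2 ≤ n → ∀ c : (Fin d → Fin n) → ℤ,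
      (∀ k, c k = 0 ∨ c k = 1 ∨ c k = -1) →
      (∃ k, c k ≠ 0) →
      (∃ j : Fin d, ∀ k k' : Fin d → Fin n, c k ≠ 0 → c k = c k' → k ≠ k' →
        (n : ℝ) ^ μ ≤ |((k j : ℕ) : ℝ) - ((k' j : ℕ) : ℝ)|) →
      ∀ Δ L : ℝ, 1 ≤ Δ → 1 ≤ L → L ≤ (n : ℝ) ^ Δ →
        ∃ z : Fin d → ℂ,
          (∀ i, ∃ θ : ℝ, |θ| ≤ π / L ∧ z i = Complex.exp (θ * Complex.I)) ∧
          Real.exp (-C * Δ * L * (n : ℝ) ^ (1 - μ) * Real.log n) ≤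
            ‖∑ k : Fin d → Fin n, (c k : ℂ) * ∏ i, z i ^ (k i : ℕ)‖ :=
  stmt_4_general d μ hμ0 hμ1
end

section
/- Let h(z₁,...,z_d) = Σ_{k ∈ [n]^d} c_k z₁^{k₁}···z_d^{k_d} be a nonzero polynomial with all coefficients c_k ∈ {0, ±1}. Then for any L ≥ 1 there exist z₁,...,z_d ∈ γ(L) such that |h(z₁,...,z_d)| ≥ exp(-C L n log n) for a constant C depending only on d. -/
/-!
Take `m = ⌈2Ln⌉` and `ζ = e^{2πi/m}`. The points `ζ^j`, `j < n`, are distinct and lie in `γ(L)`,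
so by the Combinatorial Nullstellensatz `h` does not vanish at some point of the grid
`{ζ^j : j < n}^d`. There `h` is a nonzero algebraic integer of `ℚ(ζ)` whose conjugates are all
bounded by `n^d`, because the conjugates of `ζ` are roots of unity. Its norm is a nonzero
integer, hence `|h| ≥ n^{-d(m-1)} ≥ exp(-2dLn log n)`.
-/

open Real Complex

open MvPolynomial Finset in
theorem exists_ne_zero_sum_mul_prod_pow {R : Type*} [CommRing R] [IsDomain R] {d n : ℕ}
    {x : Fin n → R} (hx : Function.Injective x) {c : (Fin d → Fin n) → R} (hc : c ≠ 0) :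
    ∃ a : Fin d → Fin n, ∑ k, c k * ∏ i, x (a i) ^ (k i : ℕ) ≠ 0 := by
  classical
  set e : (Fin d → Fin n) → (Fin d →₀ ℕ) := fun k => Finsupp.equivFunOnFinite.symm (fun i => k i)
  have he : Function.Injective e := fun k l hkl => funext fun i =>
    Fin.val_injective (congrFun (Finsupp.equivFunOnFinite.symm.injective hkl) i)
  set P : MvPolynomial (Fin d) R := ∑ k, monomial (e k) (c k)
  have hdeg : ∀ i, P.degreeOf i < #(univ.image x) := by
    intro i
    obtain ⟨k₀, -⟩ := Function.ne_iff.mp hc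
    rw [card_image_of_injective _ hx, card_univ, Fintype.card_fin, degreeOf_lt_iff (k₀ i).pos]
    intro s hs
    obtain ⟨k, -, hk⟩ := mem_biUnion.mp (support_sum hs)
    rw [Finset.mem_singleton.mp (support_monomial_subset hk)]
    exact (k i).isLt
  have hcoeff : ∀ k, P.coeff (e k) = c k := by
    intro k
    simp [P, coeff_sum, coeff_monomial, he.eq_iff]
  by_contra! hzero
  have hP : P = 0 := by
    refine eq_zero_of_eval_zero_at_prod_finset P (fun _ => univ.image x) hdeg fun y hy => ?_
    choose a _ ha using fun i => mem_image.mp (hy i)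
    rw [← hzero a]
    simp [P, map_sum, eval_monomial, Finsupp.prod_fintype, e, ha]
  exact hc (funext fun k => by rw [← hcoeff k, hP, coeff_zero, Pi.zero_apply])

open Finset in
theorem NumberField.one_le_norm_mul_pow_finrank_sub_one {K : Type*} [Field K] [NumberField K]
    {α : K} (hα : IsIntegral ℤ α) (hα0 : α ≠ 0) {B : ℝ} (hB : ∀ σ : K →ₐ[ℚ] ℂ, ‖σ α‖ ≤ B)
    (σ₀ : K →ₐ[ℚ] ℂ) : 1 ≤ ‖σ₀ α‖ * B ^ (Module.finrank ℚ K - 1) := by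
  classical
  obtain ⟨m, hm⟩ := IsIntegrallyClosed.isIntegral_iff.mp (Algebra.isIntegral_norm ℚ hα)
  have hm0 : m ≠ 0 := by
    rintro rfl
    exact Algebra.norm_ne_zero_iff.mpr hα0 (by rw [← hm, map_zero])
  have hnorm : (m : ℂ) = ∏ σ : K →ₐ[ℚ] ℂ, σ α := by
    rw [← Algebra.norm_eq_prod_embeddings, ← hm, eq_intCast, map_intCast]
  calc (1 : ℝ) ≤ ‖(m : ℂ)‖ := by rw [Complex.norm_intCast]; exact_mod_cast Int.one_le_abs hm0
    _ = ‖σ₀ α‖ * ∏ σ ∈ univ.erase σ₀, ‖σ α‖ := by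
      rw [hnorm, norm_prod, ← mul_prod_erase _ _ (mem_univ σ₀)]
    _ ≤ ‖σ₀ α‖ * B ^ (Module.finrank ℚ K - 1) := by
      gcongr
      refine (prod_le_prod (fun _ _ => norm_nonneg _) fun σ _ => hB σ).trans_eq ?_
      rw [prod_const, card_erase_of_mem (mem_univ σ₀), card_univ, AlgHom.card]

open IntermediateField Polynomial in
theorem one_le_norm_mul_pow_of_pow_eq_one {ι : Type*} [Fintype ι] {ζ : ℂ} {m : ℕ} (hm : 0 < m)
    (hζ : ζ ^ m = 1) (c : ι → ℤ) (e : ι → ℕ) (h0 : ∑ j, (c j : ℂ) * ζ ^ e j ≠ 0) :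
    1 ≤ ‖∑ j, (c j : ℂ) * ζ ^ e j‖ * (∑ j, |(c j : ℝ)|) ^ (m - 1) := by
  have hint : IsIntegral ℚ ζ := (IsIntegral.of_pow (R := ℤ) hm (hζ ▸ isIntegral_one)).tower_top
  have := adjoin.finiteDimensional hint
  have : NumberField ℚ⟮ζ⟯ := ⟨⟩
  set ζK := AdjoinSimple.gen ℚ ζ
  have hζK : ζK ^ m = 1 := Subtype.ext (by simpa [ζK] using hζ)
  set α : ℚ⟮ζ⟯ := ∑ j, (c j : ℚ⟮ζ⟯) * ζK ^ e j
  have hval : (ℚ⟮ζ⟯).val α = ∑ j, (c j : ℂ) * ζ ^ e j := by simp [α, ζK]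
  have hα : IsIntegral ℤ α := IsIntegral.sum _ fun j _ =>
    (isIntegral_algebraMap (x := c j)).mul ((IsIntegral.of_pow hm (hζK ▸ isIntegral_one)).pow _)
  have hconj : ∀ σ : ℚ⟮ζ⟯ →ₐ[ℚ] ℂ, ‖σ α‖ ≤ ∑ j, |(c j : ℝ)| := by
    intro σ
    have hσ : ‖σ ζK‖ = 1 :=
      Complex.norm_eq_one_of_pow_eq_one (by rw [← map_pow, hζK, map_one]) hm.ne'
    simp only [α, map_sum, map_mul, map_intCast, map_pow]
    refine (norm_sum_le _ _).trans (le_of_eq (Finset.sum_congr rfl fun j _ => ?_))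
    rw [norm_mul, norm_pow, hσ, one_pow, mul_one, Complex.norm_intCast]
  have hfinrank : Module.finrank ℚ ℚ⟮ζ⟯ ≤ m := by
    rw [adjoin.finrank hint, ← natDegree_X_pow_sub_C (n := m) (r := (1 : ℚ))]
    exact natDegree_le_of_dvd (minpoly.dvd ℚ ζ (by simp [hζ])) (X_pow_sub_C_ne_zero hm 1)
  have hB : 1 ≤ ∑ j, |(c j : ℝ)| := by
    obtain ⟨j, hj⟩ : ∃ j, c j ≠ 0 := by
      by_contra! h
      exact h0 (by simp [h])
    calc (1 : ℝ) ≤ |(c j : ℝ)| := by exact_mod_cast Int.one_le_abs hj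
      _ ≤ ∑ j, |(c j : ℝ)| :=
        Finset.single_le_sum (f := fun j => |(c j : ℝ)|) (fun j _ => abs_nonneg _)
          (Finset.mem_univ j)
  calc 1 ≤ ‖(ℚ⟮ζ⟯).val α‖ * (∑ j, |(c j : ℝ)|) ^ (Module.finrank ℚ ℚ⟮ζ⟯ - 1) :=
        NumberField.one_le_norm_mul_pow_finrank_sub_one hα
          (fun h => h0 (by rw [← hval, h, map_zero])) hconj _
    _ ≤ ‖∑ j, (c j : ℂ) * ζ ^ e j‖ * (∑ j, |(c j : ℝ)|) ^ (m - 1) := by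
        rw [hval]
        exact mul_le_mul_of_nonneg_left (pow_le_pow_right₀ hB (by omega)) (norm_nonneg _)

theorem IsPrimitiveRoot.exists_one_le_norm_mul_pow {ζ : ℂ} {m d n : ℕ} (hζ : IsPrimitiveRoot ζ m)
    (hm : 0 < m) (hnm : n ≤ m) {c : (Fin d → Fin n) → ℤ} (hc : ∀ k, |c k| ≤ 1) (hc0 : c ≠ 0) :
    ∃ a : Fin d → Fin n, 1 ≤ ‖∑ k, (c k : ℂ) * ∏ i, (ζ ^ (a i : ℕ)) ^ (k i : ℕ)‖ *
      ((n : ℝ) ^ d) ^ (m - 1) := by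
  have hx : Function.Injective fun j : Fin n => ζ ^ (j : ℕ) := fun j j' h =>
    Fin.val_injective (hζ.pow_inj (j.isLt.trans_le hnm) (j'.isLt.trans_le hnm) h)
  obtain ⟨a, ha⟩ := exists_ne_zero_sum_mul_prod_pow hx (c := fun k => (c k : ℂ))
    (fun h => hc0 (funext fun k => by simpa using congrFun h k))
  have hprod : ∀ k : Fin d → Fin n,
      ∏ i, (ζ ^ (a i : ℕ)) ^ (k i : ℕ) = ζ ^ ∑ i, (a i : ℕ) * k i := fun k => by
    simp only [← pow_mul, Finset.prod_pow_eq_pow_sum]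
  have hB : ∑ k, |(c k : ℝ)| ≤ (n : ℝ) ^ d := by
    calc ∑ k, |(c k : ℝ)| ≤ ∑ _k : Fin d → Fin n, (1 : ℝ) :=
          Finset.sum_le_sum fun k _ => by exact_mod_cast hc k
      _ = (n : ℝ) ^ d := by simp
  refine ⟨a, ?_⟩
  simp only [hprod] at ha ⊢
  calc 1 ≤ _ := one_le_norm_mul_pow_of_pow_eq_one hm hζ.pow_eq_one c _ ha
    _ ≤ _ := by gcongr

theorem exists_abs_le_pi_div_and_exp_pow_eq {L : ℝ} (hL : 0 < L) {m n : ℕ} (hm : 2 * L * n ≤ m)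
    (j : Fin n) : ∃ θ : ℝ, |θ| ≤ π / L ∧
      Complex.exp (2 * π * Complex.I / m) ^ (j : ℕ) = Complex.exp (θ * Complex.I) := by
  have hj : 2 * L * j ≤ m := hm.trans' (by gcongr; exact_mod_cast j.isLt.le)
  have hm0 : (0 : ℝ) < m := hm.trans_lt' (by have := j.pos; positivity)
  refine ⟨2 * π * j / m, ?_, ?_⟩
  · rw [abs_of_nonneg (by positivity), div_le_div_iff₀ hm0 hL]
    nlinarith [Real.pi_pos]
  · rw [← Complex.exp_nat_mul]
    congr 1
    push_cast
    ring

theorem Real.exp_neg_mul_log_le_inv_pow {x t : ℝ} {k : ℕ} (hx : 1 ≤ x) (hk : k ≤ t) :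
    Real.exp (-(t * Real.log x)) ≤ (x ^ k)⁻¹ := by
  rw [← Real.exp_log (pow_pos (zero_lt_one.trans_le hx) k), ← Real.exp_neg, Real.exp_le_exp,
    Real.log_pow, neg_le_neg_iff]
  exact mul_le_mul_of_nonneg_right hk (Real.log_nonneg hx)

/-- Multivariate Littlewood-type bound (Corollary): if
`h(z₁,…,z_d) = Σ_{k ∈ [n]^d} c_k z₁^{k₁}⋯z_d^{k_d}` is nonzero with coefficients in
`{0,±1}`, then for any `L ≥ 1` there is a point with each coordinate in `γ(L)` where
`|h| ≥ exp(-C L n log n)`, with `C` depending only on `d`. -/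
theorem stmt_5 (d : ℕ) (hd : 1 ≤ d) :
    ∃ C : ℝ, 0 < C ∧ ∀ n : ℕ, 2 ≤ n → ∀ c : (Fin d → Fin n) → ℤ,
      (∀ k, c k = 0 ∨ c k = 1 ∨ c k = -1) →
      (∃ k, c k ≠ 0) →
      ∀ L : ℝ, 1 ≤ L →
        ∃ z : Fin d → ℂ,
          (∀ i, ∃ θ : ℝ, |θ| ≤ π / L ∧ z i = Complex.exp (θ * Complex.I)) ∧
          Real.exp (-C * L * n * Real.log n) ≤
            ‖∑ k : Fin d → Fin n, (c k : ℂ) * ∏ i, z i ^ (k i : ℕ)‖ := by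
  refine ⟨2 * d, by positivity, fun n hn c hc hc0 L hL => ?_⟩
  set m := ⌈2 * L * n⌉₊
  have hLn : 2 * L * n ≤ m := Nat.le_ceil _
  have hnm : n ≤ m := by exact_mod_cast hLn.trans' (by nlinarith : (n : ℝ) ≤ 2 * L * n)
  have hm : 0 < m := by omega
  obtain ⟨a, ha⟩ := (Complex.isPrimitiveRoot_exp m hm.ne').exists_one_le_norm_mul_pow hm hnm
    (c := c) (fun k => by rcases hc k with h | h | h <;> simp [h]) (Function.ne_iff.mpr hc0)
  refine ⟨_, fun i => exists_abs_le_pi_div_and_exp_pow_eq (by positivity) hLn (a i), ?_⟩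
  have hm1 : ((m - 1 : ℕ) : ℝ) ≤ 2 * L * n := by
    have := Nat.ceil_lt_add_one (by positivity : 0 ≤ 2 * L * n)
    rw [Nat.cast_sub hm]; push_cast; linarith
  calc Real.exp (-(2 * d) * L * n * Real.log n)
      = Real.exp (-(2 * L * n * Real.log ((n : ℝ) ^ d))) := by rw [Real.log_pow]; ring_nf
    _ ≤ (((n : ℝ) ^ d) ^ (m - 1))⁻¹ :=
        Real.exp_neg_mul_log_le_inv_pow (one_le_pow₀ (by exact_mod_cast hn.trans' one_le_two)) hm1
    _ ≤ _ := (inv_le_iff_one_le_mul₀ (by positivity)).mpr ha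
end

section
/- Let X ∈ {0,1}^{n^{×r}}, W ∈ {0,1}^{l^{×r}}, and s = ⌊(l-1)/4⌋. If W is s-aperiodic, then the set of positions k ∈ [n]^r with X_{k+[l]^r} = W (the contiguous l^{×r}-block of X starting at k equals W) is s-separated: any two distinct such positions k', k'' satisfy max_i |k'_i - k''_i| ≥ s. -/
/-- If `W ∈ {0,1}^{l^{×r}}` is `s`-aperiodic with `s = ⌊(l-1)/4⌋`, then the positions of
contiguous `l^{×r}`-blocks of `X` equal to `W` are `s`-separated: any two distinct such
positions `k', k''` satisfy `|k'_i - k''_i| ≥ s` for some coordinate `i`. -/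
theorem stmt_7 (r l : ℕ) (hr : 1 ≤ r) (hl : 2 ≤ l) (s : ℕ) (hs : s = (l - 1) / 4)
    (X W : (Fin r → ℤ) → Bool)
    (haper : ¬ ∃ t : Fin r → ℤ, t ≠ 0 ∧ (∀ i, |t i| ≤ (s : ℤ)) ∧
        ∀ k : Fin r → ℤ, (∀ i, 0 ≤ k i ∧ k i < (l : ℤ)) →
          (∀ i, 0 ≤ k i + t i ∧ k i + t i < (l : ℤ)) → W k = W (k + t))
    (k' k'' : Fin r → ℤ)
    (hk' : ∀ t : Fin r → ℤ, (∀ i, 0 ≤ t i ∧ t i < (l : ℤ)) → X (k' + t) = W t)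
    (hk'' : ∀ t : Fin r → ℤ, (∀ i, 0 ≤ t i ∧ t i < (l : ℤ)) → X (k'' + t) = W t)
    (hne : k' ≠ k'') :
    ∃ i, (s : ℤ) ≤ |k' i - k'' i| := by
  by_contra h
  push_neg at h
  apply haper
  refine ⟨k'' - k', ?_, ?_, ?_⟩
  · intro h0
    exact hne (by rw [sub_eq_zero] at h0; exact h0.symm)
  · intro i
    have := h i
    rw [abs_sub_comm] at this
    exact le_of_lt this
  · intro k hk hkt
    have h1 : W k = X (k'' + k) := (hk'' k hk).symm
    have h2 : X (k' + (k + (k'' - k'))) = W (k + (k'' - k')) := hk' _ hkt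
    have h3 : k' + (k + (k'' - k')) = k'' + k := by ring
    rw [h1, ← h2, h3]
end

section
/- For every nonzero hypermatrix A ∈ {0,±1}^{n^{×d}}, there exists a sequence of nonzero sub-hypermatrices A^d = A, A^{d-1}, ..., A^1, A^0 = ±1 and integers 0 ≤ λ_d ≤ λ_{d-1} ≤ ... ≤ λ₁ ≤ ⌊(n-1)/2⌋ such that for each i, after a suitable permutation of coordinates and possible coordinate reversal, A^i satisfies: A^i_{k₁,...,k_i} = 0 whenever k_i < λ_i, some entry with k_i = λ_i is nonzero, and A^{i-1} is the slice of A^i obtained by fixing k_i = λ_i. -/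
private def mval {n : ℕ} (v : Fin n) : ℕ := min (v : ℕ) ((v.rev : Fin n) : ℕ)

private lemma mval_rev {n : ℕ} (v : Fin n) : mval v.rev = mval v := by
  simp [mval, Fin.rev_rev, Nat.min_comm]

private lemma mval_le_half {n : ℕ} (v : Fin n) : mval v ≤ (n - 1) / 2 := by
  have h1 : (v : ℕ) < n := v.isLt
  have h2 : ((v.rev : Fin n) : ℕ) = n - ((v : ℕ) + 1) := Fin.val_rev v
  rcases Nat.le_total (v : ℕ) ((v.rev : Fin n) : ℕ) with h | h
  · rw [mval, Nat.min_eq_left h]; omega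
  · rw [mval, Nat.min_eq_right h]; omega

private noncomputable def lamOf {n m : ℕ} (A : (Fin m → Fin n) → ℤ) : ℕ :=
  sInf {L | ∃ k j, A k ≠ 0 ∧ mval (k j) = L}

private def tf {n m : ℕ} (σ : Equiv.Perm (Fin m)) (ε : Fin m → Bool) (k : Fin m → Fin n) :
    Fin m → Fin n := fun j => if ε j then (k (σ j)).rev else k (σ j)

private lemma step {n i : ℕ} (A : (Fin (i + 1) → Fin n) → ℤ) (hA : ∃ k, A k ≠ 0) :
    ∃ (σ : Equiv.Perm (Fin (i + 1))) (ε : Fin (i + 1) → Bool) (μ : Fin n),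
      (μ : ℕ) = lamOf A ∧
      (∀ k : Fin (i + 1) → Fin n, ((k (Fin.last i)) : ℕ) < lamOf A → A (tf σ ε k) = 0) ∧
      (∃ k : Fin (i + 1) → Fin n, k (Fin.last i) = μ ∧ A (tf σ ε k) ≠ 0) := by
  have hne : {L | ∃ k j, A k ≠ 0 ∧ mval (k j) = L}.Nonempty := by
    obtain ⟨k, hk⟩ := hA
    exact ⟨mval (k (Fin.last i)), k, Fin.last i, hk, rfl⟩
  have hmem : ∃ k j, A k ≠ 0 ∧ mval (k j) = lamOf A := Nat.sInf_mem hne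
  obtain ⟨k₀, j₀, hk₀, hm⟩ := hmem
  have hrevval : ¬((k₀ j₀ : ℕ) = lamOf A) → (((k₀ j₀).rev : Fin n) : ℕ) = lamOf A := by
    intro h
    rcases Nat.le_total ((k₀ j₀ : ℕ)) (((k₀ j₀).rev : Fin n) : ℕ) with hle | hle
    · rw [mval, Nat.min_eq_left hle] at hm; exact absurd hm h
    · rw [mval, Nat.min_eq_right hle] at hm; exact hm
  set b : Bool := decide ((k₀ j₀ : ℕ) ≠ lamOf A) with hb
  set σ : Equiv.Perm (Fin (i + 1)) := Equiv.swap j₀ (Fin.last i) with hσ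
  set ε : Fin (i + 1) → Bool := fun j => if j = j₀ then b else false with hε
  set μ : Fin n := if b then (k₀ j₀).rev else k₀ j₀ with hμ
  have hμval : (μ : ℕ) = lamOf A := by
    by_cases h : (k₀ j₀ : ℕ) = lamOf A
    · have hbf : b = false := by simp [hb, h]
      rw [hμ, hbf]; simpa using h
    · have hbt : b = true := by simp [hb, h]
      rw [hμ, hbt]; simpa using hrevval h
  refine ⟨σ, ε, μ, hμval, ?_, ?_⟩
  · intro k hk
    by_contra hnz
    have h1 : lamOf A ≤ mval ((tf σ ε k) j₀) := Nat.sInf_le ⟨_, j₀, hnz, rfl⟩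
    have h2 : (tf σ ε k) j₀ = if b then (k (Fin.last i)).rev else (k (Fin.last i)) := by
      simp [tf, hε, hσ, Equiv.swap_apply_left]
    have h3 : mval ((tf σ ε k) j₀) ≤ (k (Fin.last i) : ℕ) := by
      rw [h2]
      have hle : ∀ v : Fin n, mval v ≤ (v : ℕ) := fun v => Nat.min_le_left _ _
      cases b
      · simpa using hle _
      · simpa [mval_rev] using hle _
    omega
  · refine ⟨fun p => if ε (σ p) then (k₀ (σ p)).rev else k₀ (σ p), ?_, ?_⟩
    · have hσlast : σ (Fin.last i) = j₀ := Equiv.swap_apply_right _ _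
      simp only [hσlast]
      simp [hε, hμ]
    · have hkey : tf σ ε (fun p => if ε (σ p) then (k₀ (σ p)).rev else k₀ (σ p)) = k₀ := by
        funext j
        have hσσ : σ (σ j) = j := Equiv.swap_apply_self _ _ _
        simp only [tf, hσσ]
        cases h : ε j <;> simp [h, Fin.rev_rev]
      rw [hkey]; exact hk₀


private def extend {n : ℕ} (d : ℕ) (B' : (i : ℕ) → (Fin i → Fin n) → ℤ)
    (A : (Fin (d + 1) → Fin n) → ℤ) : (i : ℕ) → (Fin i → Fin n) → ℤ :=
  fun i => if h : i = d + 1 then cast (by rw [h]) A else B' i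

private lemma extend_self {n d : ℕ} (B' : (i : ℕ) → (Fin i → Fin n) → ℤ)
    (A : (Fin (d + 1) → Fin n) → ℤ) : extend d B' A (d + 1) = A := by
  simp [extend]

private lemma extend_ne {n d i : ℕ} (B' : (i : ℕ) → (Fin i → Fin n) → ℤ)
    (A : (Fin (d + 1) → Fin n) → ℤ) (h : i ≤ d) : extend d B' A i = B' i := by
  rw [extend, dif_neg (by omega)]

private lemma aux {n : ℕ} (d : ℕ) (hd : 1 ≤ d) (A : (Fin d → Fin n) → ℤ)
    (hA : ∃ k, A k ≠ 0) :
    ∃ B : (i : ℕ) → (Fin i → Fin n) → ℤ,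
      B d = A ∧
      (∀ i, i ≤ d → ∃ k, B i k ≠ 0) ∧
      (∀ i, i ≤ d → ∀ k, ∃ k₀, B i k = A k₀) ∧
      (∀ i, i < d →
        ∃ (σ : Equiv.Perm (Fin (i + 1))) (ε : Fin (i + 1) → Bool) (μ : Fin n),
          (μ : ℕ) = lamOf (B (i + 1)) ∧
          (∀ k, ((k (Fin.last i)) : ℕ) < lamOf (B (i + 1)) → B (i + 1) (tf σ ε k) = 0) ∧
          (∃ k, ((k (Fin.last i)) : ℕ) = lamOf (B (i + 1)) ∧ B (i + 1) (tf σ ε k) ≠ 0) ∧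
          (∀ k', B i k' = B (i + 1) (tf σ ε (Fin.snoc k' μ)))) := by
  induction d, hd using Nat.le_induction with
  | base =>
    obtain ⟨σ, ε, μ, hμ, hvan, kw, hkwlast, hkwnz⟩ := step A hA
    set c : ℤ := A (tf σ ε (Fin.snoc (fun j : Fin 0 => j.elim0) μ)) with hc
    have hsnoc : ∀ k' : Fin 0 → Fin n,
        (Fin.snoc k' μ : Fin 1 → Fin n) = Fin.snoc (fun j : Fin 0 => j.elim0) μ := by
      intro k'
      rw [Subsingleton.elim k' (fun j : Fin 0 => j.elim0)]
    have hckw : c = A (tf σ ε kw) := by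
      rw [hc]
      congr 1
      rw [← hsnoc (Fin.init kw)]
      have : (Fin.snoc (Fin.init kw) μ : Fin 1 → Fin n) = kw := by
        rw [← hkwlast]; exact Fin.snoc_init_self kw
      rw [this]
    refine ⟨extend 0 (fun _ _ => c) A, extend_self _ _, ?_, ?_, ?_⟩
    · intro i hi
      interval_cases i
      · exact ⟨fun j => j.elim0, by rw [extend_ne _ _ le_rfl]; rw [hckw]; exact hkwnz⟩
      · exact hA.imp fun k hk => by rw [extend_self]; exact hk
    · intro i hi k
      interval_cases i
      · exact ⟨tf σ ε (Fin.snoc (fun j : Fin 0 => j.elim0) μ), by rw [extend_ne _ _ le_rfl]⟩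
      · exact ⟨k, by rw [extend_self]⟩
    · intro i hi
      interval_cases i
      refine ⟨σ, ε, μ, ?_, ?_, ?_, ?_⟩
      · rw [extend_self]; exact hμ
      · rw [extend_self]; exact hvan
      · rw [extend_self]
        exact ⟨kw, by rw [hkwlast, hμ], hkwnz⟩
      · intro k'
        rw [extend_self, extend_ne _ _ le_rfl, hsnoc]
    | succ d hd ih =>
    obtain ⟨σ, ε, μ, hμ, hvan, kw, hkwlast, hkwnz⟩ := step A hA
    set A' : (Fin d → Fin n) → ℤ := fun k' => A (tf σ ε (Fin.snoc k' μ)) with hA'def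
    have hA' : ∃ k', A' k' ≠ 0 := by
      refine ⟨Fin.init kw, ?_⟩
      have : (Fin.snoc (Fin.init kw) μ : Fin (d + 1) → Fin n) = kw := by
        rw [← hkwlast]; exact Fin.snoc_init_self kw
      rw [hA'def]; simpa [this] using hkwnz
    obtain ⟨B', hB'd, hnz', hvals', hstep'⟩ := ih A' hA'
    refine ⟨extend d B' A, extend_self _ _, ?_, ?_, ?_⟩
    · intro i hi
      rcases Nat.lt_or_ge i (d + 1) with h | h
      · rw [extend_ne _ _ (by omega)]
        exact hnz' i (by omega)
      · have : i = d + 1 := by omega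
        subst this
        rw [extend_self]; exact hA
    · intro i hi k
      rcases Nat.lt_or_ge i (d + 1) with h | h
      · rw [extend_ne _ _ (by omega)]
        obtain ⟨k₀, hk₀⟩ := hvals' i (by omega) k
        exact ⟨tf σ ε (Fin.snoc k₀ μ), by rw [hk₀, hA'def]⟩
      · have : i = d + 1 := by omega
        subst this
        exact ⟨k, by rw [extend_self]⟩
    · intro i hi
      rcases Nat.lt_or_ge i d with h | h
      · obtain ⟨σ', ε', μ', h1, h2, h3, h4⟩ := hstep' i h
        rw [extend_ne _ _ (by omega), extend_ne _ _ (by omega)]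
        exact ⟨σ', ε', μ', h1, h2, h3, h4⟩
      · have : i = d := by omega
        subst this
        rw [extend_self, extend_ne _ _ le_rfl, hB'd]
        exact ⟨σ, ε, μ, hμ, hvan, ⟨kw, by rw [hkwlast, hμ], hkwnz⟩, fun k' => rfl⟩

/-- Dimension reduction: every nonzero `A ∈ {0,±1}^{n^{×d}}` admits a chain of nonzero
sub-hypermatrices `A = B d, B (d-1), …, B 0 = ±1` together with integers
`λ_d ≤ λ_{d-1} ≤ ⋯ ≤ λ₁ ≤ ⌊(n-1)/2⌋` such that at each step, after a coordinate
permutation `σ` and coordinate reversals `ε`, the transformed `B (i+1)` vanishes whenever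
its last coordinate is `< λ_{i+1}`, is nonzero somewhere with last coordinate `= λ_{i+1}`,
and `B i` is its slice at last coordinate `λ_{i+1}`. -/
theorem stmt_8 (d n : ℕ) (hd : 1 ≤ d) (A : (Fin d → Fin n) → ℤ)
    (hval : ∀ k, A k = 0 ∨ A k = 1 ∨ A k = -1) (hA : ∃ k, A k ≠ 0) :
    ∃ (B : (i : ℕ) → (Fin i → Fin n) → ℤ) (lam : ℕ → ℕ),
      B d = A ∧
      (∀ i : ℕ, i ≤ d → ∃ k, B i k ≠ 0) ∧
      (B 0 (fun j => j.elim0) = 1 ∨ B 0 (fun j => j.elim0) = -1) ∧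
      (∀ i : ℕ, 1 ≤ i → i < d → lam (i + 1) ≤ lam i) ∧
      (∀ i : ℕ, 1 ≤ i → i ≤ d → lam i ≤ (n - 1) / 2) ∧
      (∀ i : ℕ, i < d →
        ∃ (σ : Equiv.Perm (Fin (i + 1))) (ε : Fin (i + 1) → Bool) (μ : Fin n),
          (μ : ℕ) = lam (i + 1) ∧
          (∀ k : Fin (i + 1) → Fin n, ((k (Fin.last i)) : ℕ) < lam (i + 1) →
            B (i + 1) (fun j => if ε j then (k (σ j)).rev else k (σ j)) = 0) ∧
          (∃ k : Fin (i + 1) → Fin n, ((k (Fin.last i)) : ℕ) = lam (i + 1) ∧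
            B (i + 1) (fun j => if ε j then (k (σ j)).rev else k (σ j)) ≠ 0) ∧
          (∀ k' : Fin i → Fin n,
            B i k' =
              B (i + 1) (fun j =>
                if ε j then ((Fin.snoc k' μ : Fin (i + 1) → Fin n) (σ j)).rev
                else (Fin.snoc k' μ : Fin (i + 1) → Fin n) (σ j)))) := by
  obtain ⟨B, hBd, hnz, hvals, hstep⟩ := aux d hd A hA
  have hset : ∀ i : ℕ, 1 ≤ i → i ≤ d →
      {L | ∃ k j, B i k ≠ 0 ∧ mval (k j) = L}.Nonempty := by
    intro i h1 h2
    obtain ⟨k, hk⟩ := hnz i h2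
    exact ⟨mval (k ⟨0, h1⟩), k, ⟨0, h1⟩, hk, rfl⟩
  refine ⟨B, fun i => lamOf (B i), hBd, hnz, ?_, ?_, ?_, ?_⟩
  · -- B 0 = ±1
    obtain ⟨k, hk⟩ := hnz 0 (Nat.zero_le d)
    have hke : k = fun j : Fin 0 => j.elim0 := funext fun j => j.elim0
    obtain ⟨k₀, hk₀⟩ := hvals 0 (Nat.zero_le d) (fun j : Fin 0 => j.elim0)
    rw [hk₀]
    rcases hval k₀ with h | h | h
    · exact absurd (by rw [hke, hk₀, h] at hk; exact hk rfl) not_false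
    · exact Or.inl h
    · exact Or.inr h
  · -- monotonicity
    intro i h1 h2
    obtain ⟨σ, ε, μ, hμ, hvan, hwit, hslice⟩ := hstep i h2
    have hmem : ∃ k j, B i k ≠ 0 ∧ mval (k j) = lamOf (B i) :=
      Nat.sInf_mem (hset i h1 (le_of_lt h2))
    obtain ⟨k', p, hk', hmv⟩ := hmem
    have hnz2 : B (i + 1) (tf σ ε (Fin.snoc k' μ)) ≠ 0 := by
      rw [← hslice k']; exact hk'
    have hle : lamOf (B (i + 1)) ≤ mval ((tf σ ε (Fin.snoc k' μ)) (σ.symm p.castSucc)) :=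
      Nat.sInf_le ⟨_, σ.symm p.castSucc, hnz2, rfl⟩
    have hval2 : mval ((tf σ ε (Fin.snoc k' μ)) (σ.symm p.castSucc)) = mval (k' p) := by
      have h4 : σ (σ.symm p.castSucc) = p.castSucc := Equiv.apply_symm_apply σ _
      simp only [tf, h4, Fin.snoc_castSucc]
      cases h : ε (σ.symm p.castSucc) <;> simp [mval_rev]
    rw [hval2, hmv] at hle
    exact hle
  · -- bound
    intro i h1 h2
    obtain ⟨k, j, hk, hmv⟩ :
        ∃ k j, B i k ≠ 0 ∧ mval (k j) = lamOf (B i) := Nat.sInf_mem (hset i h1 h2)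
    show lamOf (B i) ≤ (n - 1) / 2
    rw [← hmv]
    exact mval_le_half _
  · intro i hi
    obtain ⟨σ, ε, μ, hμ, hvan, hwit, hslice⟩ := hstep i hi
    exact ⟨σ, ε, μ, hμ, hvan, hwit, hslice⟩
end

section
/- Let x = (x₀,...,x_{n-1}) ∈ {0,1}ⁿ and let X̃ be a random trace of x obtained by deleting each bit independently with probability q ∈ (0,1), padding with zeros on the right. Then for all w, z ∈ ℂ with z = pw + q (p = 1-q), E[Σ_{j≥0} X̃_j w^j] = p Σ_{k=0}^{n-1} x_k z^k. -/
open Finset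

private def finsetEqv (n : ℕ) : (Fin n → Bool) ≃ Finset (Fin n) where
  toFun f := univ.filter (fun i => f i = true)
  invFun S i := decide (i ∈ S)
  left_inv f := by funext i; simp
  right_inv S := by ext i; simp

/-- The single-bit generating identity for the deletion channel: for `x ∈ {0,1}ⁿ` and a
trace `X̃` obtained by deleting each bit independently with probability `q` (surviving
bits concatenated in order and padded by zeros), for `z = pw + q` one has
`E[Σ_j X̃_j w^j] = p Σ_k x_k z^k`. The expectation is written as a sum over survival
sets `S ⊆ [n]`, each with probability `p^{|S|} q^{n-|S|}`, and the `j`-th trace bit at a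
surviving position `k ∈ S` sits at index `j = #{k' ∈ S : k' < k}`. -/
theorem stmt_10 (n : ℕ) (x : Fin n → Bool) (p q : ℝ) (hq0 : 0 < q) (hq1 : q < 1)
    (hpq : p = 1 - q) (w z : ℂ) (hz : z = (p : ℂ) * w + (q : ℂ)) :
    (∑ S : Finset (Fin n), (p : ℂ) ^ S.card * (q : ℂ) ^ (n - S.card) *
        ∑ k ∈ S, (if x k then 1 else 0 : ℂ) * w ^ (S.filter (fun k' => k' < k)).card) =
      (p : ℂ) * ∑ k : Fin n, (if x k then 1 else 0 : ℂ) * z ^ (k : ℕ) := by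
  have hpq1 : (p : ℂ) + q = 1 := by rw [hpq]; push_cast; ring
  have key : ∀ k : Fin n,
      (∑ S : Finset (Fin n), (p : ℂ) ^ S.card * (q : ℂ) ^ (n - S.card) *
        (if k ∈ S then (w ^ (S.filter (fun k' => k' < k)).card) else 0))
      = (p : ℂ) * z ^ (k : ℕ) := by
    intro k
    set g : Fin n → Bool → ℂ := fun i b =>
      (if b then (p : ℂ) else q) * (if b ∧ i < k then w else 1) *
        (if i = k then (if b then 1 else 0) else 1) with hg
    set e := finsetEqv n with he
    rw [← Equiv.sum_comp e]
    have hA : ∀ f : Fin n → Bool,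
        (p : ℂ) ^ (e f).card * (q : ℂ) ^ (n - (e f).card) *
          (if k ∈ e f then (w ^ ((e f).filter (fun k' => k' < k)).card) else 0)
        = ∏ i, g i (f i) := by
      intro f
      have h1 : (∏ i, (if f i then (p : ℂ) else q))
          = (p : ℂ) ^ (e f).card * (q : ℂ) ^ (n - (e f).card) := by
        have hef : e f = univ.filter (fun i => f i = true) := rfl
        rw [Finset.prod_ite (fun _ => (p : ℂ)) (fun _ => (q : ℂ)), prod_const, prod_const, hef]
        have h := Finset.card_filter_add_card_filter_not
          (s := (univ : Finset (Fin n))) (p := fun i => f i = true)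
        simp only [Finset.card_univ, Fintype.card_fin] at h
        congr 2
        omega
      have h2 : (∏ i, (if f i ∧ i < k then w else 1))
          = w ^ ((e f).filter (fun k' => k' < k)).card := by
        rw [Finset.prod_ite (fun _ => w) (fun _ => (1:ℂ))]
        simp only [prod_const, one_pow, mul_one]
        congr 1
        simp [he, finsetEqv, Finset.filter_filter]
      have h3 : (∏ i, (if i = k then (if f i then (1:ℂ) else 0) else 1))
          = if k ∈ e f then 1 else 0 := by
        rw [Finset.prod_ite_eq' univ k (fun i => if f i then (1:ℂ) else 0)]
        simp [he, finsetEqv]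
      rw [hg]
      simp only [Finset.prod_mul_distrib, h1, h2, h3]
      by_cases hk : k ∈ e f <;> simp [hk, mul_comm]
    have hB : (∏ i, ∑ b : Bool, g i b) = (p : ℂ) * z ^ (k : ℕ) := by
      have hsum : ∀ i : Fin n, (∑ b : Bool, g i b)
          = if i = k then (p : ℂ) else if i < k then z else 1 := by
        intro i
        rw [Fintype.sum_bool, hg]
        by_cases hik : i = k
        · subst hik
          simp [lt_irrefl]
        · by_cases hlt : i < k
          · simp only [hik, hlt, if_true, if_false, and_true, and_false]
            simp [hz]
          · simp [hik, hlt, hpq1]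
      simp only [hsum]
      rw [← Finset.mul_prod_erase univ _ (mem_univ k)]
      simp only [if_pos rfl]
      congr 1
      have hcong : ∀ i ∈ univ.erase k, (if i = k then (p:ℂ) else if i < k then z else 1)
          = if i < k then z else 1 := by
        intro i hi
        rw [if_neg (Finset.ne_of_mem_erase hi)]
      rw [Finset.prod_congr rfl hcong]
      rw [Finset.prod_ite (fun _ => z) (fun _ => (1:ℂ))]
      simp only [prod_const, one_pow, mul_one]
      congr 1
      have h4 : (univ.erase k).filter (fun i => i < k) = univ.filter (fun i => i < k) := by
        ext i
        simp only [mem_filter, mem_erase, mem_univ, true_and, and_true]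
        constructor
        · rintro ⟨-, h⟩; exact h
        · intro h; exact ⟨ne_of_lt h, h⟩
      rw [h4]
      have h5 : univ.filter (fun i : Fin n => i < k) = Finset.Iio k := by
        ext i; simp
      rw [h5, Fin.card_Iio]
    calc (∑ f : Fin n → Bool, (p : ℂ) ^ (e f).card * (q : ℂ) ^ (n - (e f).card) *
          (if k ∈ e f then (w ^ ((e f).filter (fun k' => k' < k)).card) else 0))
        = ∑ f : Fin n → Bool, ∏ i, g i (f i) :=
          Finset.sum_congr rfl fun f _ => hA f
      _ = ∏ i, ∑ b : Bool, g i b := (Fintype.prod_sum g).symm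
      _ = (p : ℂ) * z ^ (k : ℕ) := hB
  calc (∑ S : Finset (Fin n), (p : ℂ) ^ S.card * (q : ℂ) ^ (n - S.card) *
        ∑ k ∈ S, (if x k then 1 else 0 : ℂ) * w ^ (S.filter (fun k' => k' < k)).card)
      = ∑ S : Finset (Fin n), ∑ k : Fin n,
          (if x k then 1 else 0 : ℂ) * ((p : ℂ) ^ S.card * (q : ℂ) ^ (n - S.card) *
            (if k ∈ S then (w ^ (S.filter (fun k' => k' < k)).card) else 0)) := by
        refine Finset.sum_congr rfl fun S _ => ?_
        rw [Finset.mul_sum]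
        symm
        calc ∑ k : Fin n, (if x k then 1 else 0 : ℂ) * ((p : ℂ) ^ S.card * (q : ℂ) ^ (n - S.card) *
              (if k ∈ S then (w ^ (S.filter (fun k' => k' < k)).card) else 0))
            = ∑ k : Fin n, (if k ∈ S then (p : ℂ) ^ S.card * (q : ℂ) ^ (n - S.card) *
                ((if x k then 1 else 0 : ℂ) * w ^ (S.filter (fun k' => k' < k)).card) else 0) := by
              refine Finset.sum_congr rfl fun k _ => ?_
              by_cases hk : k ∈ S
              · simp only [hk, if_true]; ring
              · simp [hk]
          _ = ∑ k ∈ univ ∩ S, (p : ℂ) ^ S.card * (q : ℂ) ^ (n - S.card) *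
                ((if x k then 1 else 0 : ℂ) * w ^ (S.filter (fun k' => k' < k)).card) :=
              Finset.sum_ite_mem univ S _
          _ = ∑ k ∈ S, (p : ℂ) ^ S.card * (q : ℂ) ^ (n - S.card) *
                ((if x k then 1 else 0 : ℂ) * w ^ (S.filter (fun k' => k' < k)).card) := by
              rw [Finset.univ_inter]
    _ = ∑ k : Fin n, (if x k then 1 else 0 : ℂ) *
          ∑ S : Finset (Fin n), ((p : ℂ) ^ S.card * (q : ℂ) ^ (n - S.card) *
            (if k ∈ S then (w ^ (S.filter (fun k' => k' < k)).card) else 0)) := by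
        rw [Finset.sum_comm]
        exact Finset.sum_congr rfl fun k _ => (Finset.mul_sum _ _ _).symm
    _ = (p : ℂ) * ∑ k : Fin n, (if x k then 1 else 0 : ℂ) * z ^ (k : ℕ) := by
        rw [Finset.mul_sum]
        refine Finset.sum_congr rfl fun k _ => ?_
        rw [key k]; ring
end

section
/- Let p ∈ (0,1), let L be a positive integer with L ≥ 4/p, and set ρ = 1 - 7/(pL²). Let f₁ be a complex polynomial with |f₁(0)| ≥ e^{-Bm^a} and sup_{|z|≤1} |f₁(z)| ≤ e^{Bm^a}. Define F(z) = Π_{a=1}^{L} f₁(z·e^{2πi a/L}). Then there exists z ∈ ρ·γ(L) (i.e. z = ρe^{iθ}, |θ| ≤ π/L) with |f₁(z)| ≥ e^{-3B m^a L}. -/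
/-!
With `ζ = e^{2πi/L}`, the entire function `F z = ∏_{k<L} f (z ζ^k)` satisfies `F (z ζ) = F z`
and `F 0 = f 0 ^ L`. By the maximum modulus principle `|F| ≥ |F 0|` at some point of the circle
`|z| = ρ`, and rotating that point by a power of `ζ` moves it into the arc `|arg z| ≤ π / L`
without changing `F`. Bounding the `L - 1` factors of `F z` other than `f z` by the supremum of
`|f|` then gives `|f z| ≥ |f 0|^L / (sup |f|)^(L-1)`.
-/

open Real Complex Polynomial

theorem apply_mul_zpow_eq_of_apply_mul_eq {G₀ β : Type*} [GroupWithZero G₀] {F : G₀ → β}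
    {ζ : G₀} (hζ : ζ ≠ 0) (hF : ∀ z, F (z * ζ) = F z) (n : ℤ) (z : G₀) :
    F (z * ζ ^ n) = F z := by
  induction n using Int.induction_on generalizing z with
  | zero => simp
  | succ n ih => rw [zpow_add_one₀ hζ, ← mul_assoc, hF, ih]
  | pred n ih => rw [← hF, mul_assoc, ← zpow_add_one₀ hζ, sub_add_cancel, ih]

theorem exists_arc_norm_le_of_rotation_invariant {F : ℂ → ℂ} (hF : Differentiable ℂ F)
    {L : ℕ} (hL : 0 < L) (hrot : ∀ z, F (z * exp (2 * π * I / L)) = F z) {ρ : ℝ} (hρ : 0 < ρ) :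
    ∃ θ : ℝ, |θ| ≤ π / L ∧ ‖F 0‖ ≤ ‖F (ρ * exp (θ * I))‖ := by
  obtain ⟨w, hw, hmax⟩ := exists_mem_frontier_isMaxOn_norm (Metric.isBounded_ball (x := 0))
    (Metric.nonempty_ball.2 hρ) hF.diffContOnCl
  rw [frontier_ball 0 hρ.ne', mem_sphere_zero_iff_norm] at hw
  rw [closure_ball 0 hρ.ne'] at hmax
  have hper : 0 < 2 * (π / L) := by positivity
  set θ := toIocMod hper (-(π / L)) (arg w)
  obtain ⟨hθl, hθu⟩ := toIocMod_mem_Ioc hper (-(π / L)) (arg w)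
  refine ⟨θ, abs_le.2 ⟨hθl.le, by linarith⟩, ?_⟩
  obtain ⟨n, harg⟩ : ∃ n : ℤ, arg w = θ + n * (2 * (π / L)) :=
    ⟨_, by rw [← zsmul_eq_mul, toIocMod_add_toIocDiv_zsmul]⟩
  have hw_rot : w = ρ * exp (θ * I) * exp (2 * π * I / L) ^ n := by
    rw [← norm_mul_exp_arg_mul_I w, hw, harg, ← exp_int_mul, mul_assoc, ← Complex.exp_add]
    push_cast
    ring_nf
  calc ‖F 0‖ ≤ ‖F w‖ := hmax (Metric.mem_closedBall_self hρ.le)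
    _ = ‖F (ρ * exp (θ * I))‖ := by
      rw [hw_rot, apply_mul_zpow_eq_of_apply_mul_eq (Complex.exp_ne_zero _) hrot]

def rotationProduct {M N : Type*} [Monoid M] [CommMonoid N] (f : M → N) (ζ : M) (L : ℕ)
    (z : M) : N :=
  ∏ k ∈ Finset.range L, f (z * ζ ^ k)

section rotationProduct

variable {M N : Type*} [Monoid M] [CommMonoid N] (f : M → N) {ζ : M} {L : ℕ}

theorem rotationProduct_mul_of_pow_eq_one (hζ : ζ ^ L = 1) (z : M) :
    rotationProduct f ζ L (z * ζ) = rotationProduct f ζ L z := by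
  cases L with
  | zero => simp [rotationProduct]
  | succ n =>
    simp only [rotationProduct, mul_assoc, ← pow_succ']
    rw [Finset.prod_range_succ, Finset.prod_range_succ' (fun k => f (z * ζ ^ k)), hζ, pow_zero]

theorem rotationProduct_apply_of_mul_eq_self {z : M} (hz : ∀ w, z * w = z) :
    rotationProduct f ζ L z = f z ^ L := by
  simp [rotationProduct, hz]

end rotationProduct

theorem norm_rotationProduct_le {f : ℂ → ℂ} {ζ : ℂ} (hζ : ‖ζ‖ = 1) {n : ℕ} {z : ℂ} {C : ℝ}
    (hC : ∀ w, ‖w‖ = ‖z‖ → ‖f w‖ ≤ C) :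
    ‖rotationProduct f ζ (n + 1) z‖ ≤ ‖f z‖ * C ^ n := by
  rw [rotationProduct, Finset.prod_range_succ', norm_mul, norm_prod, pow_zero, mul_one,
    mul_comm]
  gcongr
  calc ∏ k ∈ Finset.range n, ‖f (z * ζ ^ (k + 1))‖ ≤ ∏ _k ∈ Finset.range n, C :=
        Finset.prod_le_prod (fun _ _ => norm_nonneg _)
          fun k _ => hC _ (by rw [norm_mul, norm_pow, hζ, one_pow, mul_one])
    _ = C ^ n := by rw [Finset.prod_const, Finset.card_range]

theorem exists_arc_norm_pow_le {f : ℂ → ℂ} (hf : Differentiable ℂ f) {L : ℕ} (hL : 0 < L)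
    {ρ C : ℝ} (hρ : 0 < ρ) (hC : ∀ z, ‖z‖ = ρ → ‖f z‖ ≤ C) :
    ∃ θ : ℝ, |θ| ≤ π / L ∧ ‖f 0‖ ^ L ≤ ‖f (ρ * exp (θ * I))‖ * C ^ (L - 1) := by
  have hω := isPrimitiveRoot_exp L hL.ne'
  have hF : Differentiable ℂ (rotationProduct f (exp (2 * π * I / L)) L) := by
    unfold rotationProduct
    fun_prop
  obtain ⟨θ, hθ, hmax⟩ := exists_arc_norm_le_of_rotation_invariant hF hL
    (rotationProduct_mul_of_pow_eq_one f hω.pow_eq_one) hρ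
  refine ⟨θ, hθ, ?_⟩
  have hz : ‖(ρ : ℂ) * exp (θ * I)‖ = ρ := by
    rw [norm_mul, norm_exp_ofReal_mul_I, norm_real, norm_of_nonneg hρ.le, mul_one]
  obtain ⟨n, rfl⟩ : ∃ n, L = n + 1 := ⟨L - 1, by omega⟩
  calc ‖f 0‖ ^ (n + 1) = ‖rotationProduct f (exp (2 * π * I / ↑(n + 1))) (n + 1) 0‖ := by
        rw [rotationProduct_apply_of_mul_eq_self f zero_mul, norm_pow]
    _ ≤ _ := hmax
    _ ≤ ‖f (ρ * exp (θ * I))‖ * C ^ n :=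
        norm_rotationProduct_le (hω.norm'_eq_one hL.ne') fun w hw => hC w (hw.trans hz)

theorem stmt_11_general (p : ℝ) (hp0 : 0 < p) (hp1 : p < 1) (L : ℕ) (hL : 4 / p ≤ (L : ℝ))
    (B a : ℝ) (m : ℕ) (f₁ : Polynomial ℂ)
    (h0 : Real.exp (-B * (m : ℝ) ^ a) ≤ ‖f₁.eval 0‖)
    (hsup : ∀ z : ℂ, ‖z‖ ≤ 1 → ‖f₁.eval z‖ ≤ Real.exp (B * (m : ℝ) ^ a)) :
    ∃ z : ℂ,
      (∃ θ : ℝ, |θ| ≤ π / L ∧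
          z = ((1 - 7 / (p * (L : ℝ) ^ 2) : ℝ) : ℂ) * Complex.exp (θ * Complex.I)) ∧
      Real.exp (-3 * B * (m : ℝ) ^ a * L) ≤ ‖f₁.eval z‖ := by
  set M := B * (m : ℝ) ^ a
  have hM : 0 ≤ M := by
    have := h0.trans (hsup 0 (by simp))
    rw [Real.exp_le_exp] at this
    linarith
  have hpL : 4 ≤ p * L := by rwa [div_le_iff₀' hp0] at hL
  have hL4 : 4 < (L : ℝ) := lt_of_lt_of_le ((lt_div_iff₀ hp0).2 (by linarith)) hL
  have hρ0 : 0 < 1 - 7 / (p * (L : ℝ) ^ 2) :=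
    sub_pos.2 ((div_lt_one (by positivity)).2 (by nlinarith))
  have hρ1 : 1 - 7 / (p * (L : ℝ) ^ 2) ≤ 1 := by
    have : 0 ≤ 7 / (p * (L : ℝ) ^ 2) := by positivity
    linarith
  obtain ⟨θ, hθ, hbound⟩ := exists_arc_norm_pow_le f₁.differentiable
    ((Nat.cast_pos (α := ℝ)).1 (by linarith)) hρ0 (fun z hz => hsup z (hz.trans_le hρ1))
  refine ⟨_, ⟨θ, hθ, rfl⟩, ?_⟩
  have hlower := (pow_le_pow_left₀ (Real.exp_nonneg _) (neg_mul B _ ▸ h0) L).trans hbound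
  rw [← Real.exp_nat_mul, ← Real.exp_nat_mul, ← div_le_iff₀ (Real.exp_pos _),
    ← Real.exp_sub] at hlower
  refine le_trans (Real.exp_le_exp.2 ?_) hlower
  have : ((L - 1 : ℕ) : ℝ) ≤ L := by exact_mod_cast Nat.sub_le L 1
  nlinarith

/-- Maximum-modulus rotation trick: if `|f₁(0)| ≥ e^{-Bm^a}` and `|f₁| ≤ e^{Bm^a}` on the
closed unit disk, then for `L ≥ 4/p` and `ρ = 1 - 7/(pL²)` there is a point
`z = ρe^{iθ}` with `|θ| ≤ π/L` where `|f₁(z)| ≥ e^{-3Bm^a L}`. -/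
theorem stmt_11 (p : ℝ) (hp0 : 0 < p) (hp1 : p < 1) (L : ℕ) (hL : 4 / p ≤ (L : ℝ))
    (B a : ℝ) (hB : 0 ≤ B) (m : ℕ) (hm : 1 ≤ m) (f₁ : Polynomial ℂ)
    (h0 : Real.exp (-B * (m : ℝ) ^ a) ≤ ‖f₁.eval 0‖)
    (hsup : ∀ z : ℂ, ‖z‖ ≤ 1 → ‖f₁.eval z‖ ≤ Real.exp (B * (m : ℝ) ^ a)) :
    ∃ z : ℂ,
      (∃ θ : ℝ, |θ| ≤ π / L ∧
          z = ((1 - 7 / (p * (L : ℝ) ^ 2) : ℝ) : ℂ) * Complex.exp (θ * Complex.I)) ∧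
      Real.exp (-3 * B * (m : ℝ) ^ a * L) ≤ ‖f₁.eval z‖ :=
  stmt_11_general p hp0 hp1 L hL B a m f₁ h0 hsup
end

section
/- Let h̄(u) be a polynomial in one variable with all coefficients of modulus at most n^d and with constant term of modulus at least e^{-B Δ log n}, where the coefficients are obtained from a {0,±1}-coefficient d-variable polynomial via the substitution z_i = u^{b_i}. Then for any positive integer L', there exists u ∈ γ(L') with |h̄(u)| ≥ exp(-C(BΔ + d) L' log n). -/
open Real Complex Polynomial

/-! The rotations `u ↦ u e^{-2πia/L}`, `0 ≤ a < L`, move every point of the unit circle into the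
arc `γ(L)`. Hence on the unit circle `F(u) = ∏ₐ h̄(u e^{-2πia/L})` is bounded by
`(max_{γ(L)} |h̄|) (n^d)^{L-1}`, and by the maximum modulus principle so is
`|F(0)| = |h̄(0)|^L ≥ e^{-BΔL log n}`. -/

lemma exists_lt_abs_sub_two_pi_mul_le (L : ℕ) (hL : 0 < L) (φ : ℝ) :
    ∃ a < L, ∃ m : ℤ, |φ - 2 * π * a / L - m * (2 * π)| ≤ π / L := by
  have hLZ : (0 : ℤ) < L := by exact_mod_cast hL
  set k : ℤ := round (φ * L / (2 * π))
  refine ⟨(k % L).toNat, by have := Int.emod_lt_of_pos k hLZ; omega, k / L, ?_⟩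
  have hk : ((k % L).toNat : ℝ) + ((k / L : ℤ) : ℝ) * L = k := by
    have := Int.mul_ediv_add_emod k L
    rw [← Int.toNat_of_nonneg (Int.emod_nonneg k hLZ.ne')] at this
    exact_mod_cast (by linarith : ((k % L).toNat : ℤ) + k / L * L = k)
  have hθ : φ - 2 * π * ((k % L).toNat : ℕ) / L - (k / L : ℤ) * (2 * π)
      = 2 * π / L * (φ * L / (2 * π) - k) := by
    rw [← hk]
    field_simp
    ring
  rw [hθ, abs_mul, abs_of_pos (by positivity)]
  calc 2 * π / L * |φ * L / (2 * π) - k| ≤ 2 * π / L * (1 / 2) := by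
        gcongr
        exact abs_sub_round _
    _ = π / L := by ring

lemma exists_lt_mul_exp_mem_arc (L : ℕ) (hL : 0 < L) {z : ℂ} (hz : ‖z‖ = 1) :
    ∃ a < L, ∃ θ : ℝ, |θ| ≤ π / L ∧
      z * exp (-(2 * π * a / L : ℝ) * I) = exp (θ * I) := by
  obtain ⟨a, ha, m, hθ⟩ := exists_lt_abs_sub_two_pi_mul_le L hL z.arg
  refine ⟨a, ha, _, hθ, ?_⟩
  conv_lhs => rw [← norm_mul_exp_arg_mul_I z, hz]
  rw [Complex.ofReal_one, one_mul, ← Complex.exp_add]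
  push_cast
  calc exp (z.arg * I + -(2 * π * a / L) * I)
      = exp ((z.arg - 2 * π * a / L - m * (2 * π)) * I + m * (2 * π * I)) := by ring_nf
    _ = exp ((z.arg - 2 * π * a / L - m * (2 * π)) * I) := by
        rw [Complex.exp_add, exp_int_mul_two_pi_mul_I, mul_one]

lemma norm_apply_zero_pow_card_le {ι : Type*} {s : Finset ι} (ζ : ι → ℂ)
    (hζ : ∀ i, ‖ζ i‖ = 1) {f : ℂ → ℂ} (hf : Differentiable ℂ f) {A : Set ℂ}
    (hA : ∀ z : ℂ, ‖z‖ = 1 → ∃ i ∈ s, z * ζ i ∈ A) {M K : ℝ}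
    (hM : ∀ u ∈ A, ‖f u‖ ≤ M) (hK : ∀ u : ℂ, ‖u‖ = 1 → ‖f u‖ ≤ K) :
    ‖f 0‖ ^ s.card ≤ M * K ^ (s.card - 1) := by
  classical
  set F : ℂ → ℂ := fun u => ∏ i ∈ s, f (u * ζ i)
  have hF : Differentiable ℂ F :=
    Differentiable.fun_finsetProd fun i _ => hf.comp (differentiable_id.mul_const _)
  have hcircle : ∀ z : ℂ, ‖z‖ = 1 → ‖F z‖ ≤ M * K ^ (s.card - 1) := by
    intro z hz
    obtain ⟨i, hi, hzi⟩ := hA z hz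
    have hunit : ∀ j, ‖z * ζ j‖ = 1 := fun j => by rw [norm_mul, hz, hζ, one_mul]
    have hrest : ∏ j ∈ s.erase i, ‖f (z * ζ j)‖ ≤ K ^ (s.card - 1) := by
      rw [← Finset.card_erase_of_mem hi, ← Finset.prod_const]
      exact Finset.prod_le_prod (fun _ _ => norm_nonneg _) fun j _ => hK _ (hunit j)
    rw [norm_prod, ← Finset.mul_prod_erase s _ hi]
    exact mul_le_mul (hM _ hzi) hrest (Finset.prod_nonneg fun _ _ => norm_nonneg _)
      ((norm_nonneg _).trans (hM _ hzi))
  have hF0 : ‖F 0‖ ≤ M * K ^ (s.card - 1) := by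
    refine Complex.norm_le_of_forall_mem_frontier_norm_le Metric.isBounded_ball hF.diffContOnCl
      (fun z hz => hcircle z ?_) (subset_closure (Metric.mem_ball_self one_pos))
    simpa [frontier_ball (0 : ℂ) one_ne_zero] using hz
  simpa [F, norm_prod] using hF0

/-- Lower bound for the one-variable reduction `h̄`: if all coefficients of `h̄` have
modulus at most `n^d`, `|h̄| ≤ n^d` on the unit disk, and the constant term has modulus
at least `e^{-BΔ log n}`, then for any positive integer `L'` there is `u ∈ γ(L')` with
`|h̄(u)| ≥ exp(-C(BΔ + d)L' log n)`. -/
theorem stmt_12 :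
    ∃ C : ℝ, 0 < C ∧ ∀ (n d : ℕ) (B Δ : ℝ), 2 ≤ n → 0 ≤ B → 1 ≤ Δ →
      ∀ h : Polynomial ℂ,
        (∀ i : ℕ, ‖h.coeff i‖ ≤ (n : ℝ) ^ d) →
        (∀ u : ℂ, ‖u‖ ≤ 1 → ‖h.eval u‖ ≤ (n : ℝ) ^ d) →
        Real.exp (-(B * Δ * Real.log n)) ≤ ‖h.coeff 0‖ →
        ∀ L' : ℕ, 1 ≤ L' →
          ∃ u : ℂ, (∃ θ : ℝ, |θ| ≤ π / L' ∧ u = Complex.exp (θ * Complex.I)) ∧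
            Real.exp (-C * (B * Δ + d) * L' * Real.log n) ≤ ‖h.eval u‖ := by
  refine ⟨1, one_pos, fun n d B Δ hn _ _ h _ hsup hconst L' hL => ?_⟩
  obtain ⟨θ₀, hθ₀, hmax⟩ := isCompact_Icc.exists_isMaxOn
    (Set.nonempty_Icc.mpr (neg_le_self (by positivity : 0 ≤ π / L')))
    (by fun_prop :
      ContinuousOn (fun θ : ℝ => ‖h.eval (exp (θ * I))‖) (Set.Icc (-(π / L')) (π / L')))
  refine ⟨_, ⟨θ₀, abs_le.mpr hθ₀, rfl⟩, ?_⟩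
  have hpow := norm_apply_zero_pow_card_le (s := Finset.range L')
    (fun a => exp (-(2 * π * a / L' : ℝ) * I)) (fun a => by simp [Complex.norm_exp])
    h.differentiable (A := (fun θ : ℝ => exp (θ * I)) '' Set.Icc (-(π / L')) (π / L'))
    (fun z hz => by
      obtain ⟨a, ha, θ, hθ, heq⟩ := exists_lt_mul_exp_mem_arc L' hL hz
      exact ⟨a, Finset.mem_range.mpr ha, θ, abs_le.mp hθ, heq.symm⟩)
    (by rintro _ ⟨θ, hθ, rfl⟩; exact hmax hθ) (fun u hu => hsup u hu.le)
  rw [Finset.card_range, ← coeff_zero_eq_eval_zero] at hpow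
  have hn1 : (1 : ℝ) ≤ (n : ℝ) ^ d := one_le_pow₀ (by exact_mod_cast (by omega : 1 ≤ n))
  have hexp : Real.exp (-1 * (B * Δ + d) * L' * Real.log n) * ((n : ℝ) ^ d) ^ L'
      = Real.exp (-(B * Δ * Real.log n)) ^ L' := by
    rw [← pow_mul, ← Real.rpow_natCast, Real.rpow_def_of_pos (by positivity : (0 : ℝ) < n),
      ← Real.exp_add, ← Real.exp_nat_mul]
    push_cast
    ring_nf
  refine le_of_mul_le_mul_right ?_ (by positivity : (0 : ℝ) < ((n : ℝ) ^ d) ^ L')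
  calc _ = Real.exp (-(B * Δ * Real.log n)) ^ L' := hexp
    _ ≤ ‖h.coeff 0‖ ^ L' := by gcongr
    _ ≤ _ * ((n : ℝ) ^ d) ^ (L' - 1) := hpow
    _ ≤ _ := mul_le_mul_of_nonneg_left (pow_le_pow_right₀ hn1 (Nat.sub_le _ _)) (norm_nonneg _)
end

section
/- For d ≥ 2 and sufficiently large n, let S ⊂ ℝ^d be the sphere of radius (√d/2)·n centered at the origin, let R = d·n^{1-μ} for some μ ∈ [0,1), and let P be the circumscribed polytope of S formed by all tangent hyperplanes with normal vectors in N(R) = {b ∈ ℤ^d : gcd(b₁,...,b_d) = 1, ‖b‖ ≤ R}. Then every facet of P has (Euclidean) diameter less than n^μ. -/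
open Real

/-- `b` is a primitive integer vector of Euclidean norm at most `R`. -/
def IsPrimitiveShort (d : ℕ) (R : ℝ) (b : Fin d → ℤ) : Prop :=
  b ≠ 0 ∧ Finset.univ.gcd (fun i => (b i).natAbs) = 1 ∧
    Real.sqrt (∑ i, ((b i : ℝ)) ^ 2) ≤ R

/-- `x` lies in the circumscribed polytope of the sphere of radius `ρ` (centered at the
origin) formed by all tangent hyperplanes with normal vectors in `N(R)`. -/
def InCircumPolytope (d : ℕ) (R ρ : ℝ) (x : Fin d → ℝ) : Prop :=
  ∀ b : Fin d → ℤ, IsPrimitiveShort d R b →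
    (∑ i, (b i : ℝ) * x i) ≤ ρ * Real.sqrt (∑ i, ((b i : ℝ)) ^ 2)

/-!
Rounding the vector of length `L = R - √d/2` pointing in the direction of `x` to the nearest
lattice point gives an integer normal `c` with `‖c‖ ≤ R` and `‖c - L x/‖x‖‖ ≤ √d/2`; every integer
vector is a positive multiple of a primitive one, so `x` satisfies `⟪c, x⟫ ≤ ρ ‖c‖`, which forces
`‖x‖² ≤ ρ² + T²` with `T = ρ (√d/2) / (R - √d)`. A point of the facet with normal `b` lies on the
tangent hyperplane, so by Pythagoras it is within `T` of the tangent point `ρ b/‖b‖`, and the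
facet has diameter at most `2T = d n / (2 (d n^(1-μ) - √d))`, which is `< n^μ` once
`n^(1-μ) ≥ 2`.
-/

open scoped RealInnerProductSpace

section CircumscribedPolytope

variable {E : Type*} [NormedAddCommGroup E] [InnerProductSpace ℝ E]

lemma sq_norm_le_of_forall_inner_le {K : Set E} {ρ L s : ℝ} {x : E}
    (hx : ∀ c ∈ K, ⟪c, x⟫ ≤ ρ * ‖c‖)
    (hK : ∀ u : E, ‖u‖ = 1 → ∃ c ∈ K, ‖c - L • u‖ ≤ s) (hsL : s < L) :
    ‖x‖ ^ 2 ≤ ρ ^ 2 + (ρ * s / (L - s)) ^ 2 := by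
  rcases eq_or_ne x 0 with rfl | hx0
  · rw [norm_zero, zero_pow two_ne_zero]; positivity
  obtain ⟨u, hu, hxu⟩ : ∃ u : E, ‖u‖ = 1 ∧ x = ‖x‖ • u :=
    ⟨‖x‖⁻¹ • x, norm_smul_inv_norm hx0, by
      rw [smul_smul, mul_inv_cancel₀ (norm_ne_zero_iff.mpr hx0), one_smul]⟩
  have hX : 0 < ‖x‖ := norm_pos_iff.mpr hx0
  generalize ‖x‖ = X at hX hxu ⊢
  subst hxu
  obtain ⟨c, hcK, hcs⟩ := hK u hu
  set e := c - L • u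
  set a := L + ⟪e, u⟫
  have hce : c = L • u + e := by simp [e]
  have hte : |⟪e, u⟫| ≤ s :=
    (abs_real_inner_le_norm e u).trans (by rw [hu, mul_one]; exact hcs)
  have ha : L - s ≤ a := by linarith [neg_abs_le ⟪e, u⟫]
  have ha0 : 0 < a := by linarith
  have hinner : ⟪c, X • u⟫ = X * a := by
    rw [real_inner_smul_right, hce, inner_add_left, real_inner_smul_left,
      real_inner_self_eq_norm_sq, hu]
    ring
  -- `‖c‖² = a² + ‖e‖² - ⟪e, u⟫²`
  have hnorm : ‖c‖ ^ 2 ≤ a ^ 2 + s ^ 2 := by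
    have hes : ‖e‖ ^ 2 ≤ s ^ 2 := pow_le_pow_left₀ (norm_nonneg e) hcs 2
    rw [hce, norm_add_sq_real, norm_smul, real_inner_smul_left, hu, Real.norm_eq_abs,
      mul_one, sq_abs, real_inner_comm]
    nlinarith [sq_nonneg ⟪e, u⟫]
  have hbound : (X * a) ^ 2 ≤ (ρ * ‖c‖) ^ 2 :=
    pow_le_pow_left₀ (by positivity) (hinner ▸ hx c hcK) 2
  calc X ^ 2 = (X * a) ^ 2 / a ^ 2 := by field_simp
    _ ≤ (ρ * ‖c‖) ^ 2 / a ^ 2 := by gcongr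
    _ ≤ ρ ^ 2 * (a ^ 2 + s ^ 2) / a ^ 2 := by rw [mul_pow]; gcongr
    _ = ρ ^ 2 + (ρ * s) ^ 2 / a ^ 2 := by field_simp
    _ ≤ ρ ^ 2 + (ρ * s / (L - s)) ^ 2 := by
        rw [div_pow]
        gcongr

lemma norm_sub_smul_sq_of_inner_eq {u x : E} {ρ : ℝ} (hu : ‖u‖ = 1) (hx : ⟪u, x⟫ = ρ) :
    ‖x - ρ • u‖ ^ 2 = ‖x‖ ^ 2 - ρ ^ 2 := by
  rw [norm_sub_sq_real, real_inner_smul_right, real_inner_comm, hx, norm_smul, hu,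
    Real.norm_eq_abs, mul_one, sq_abs]
  ring

lemma norm_sub_smul_le_of_inner_eq {u x : E} {ρ T : ℝ} (hu : ‖u‖ = 1) (hx : ⟪u, x⟫ = ρ)
    (hxT : ‖x‖ ^ 2 ≤ ρ ^ 2 + T ^ 2) (hT : 0 ≤ T) : ‖x - ρ • u‖ ≤ T :=
  le_of_sq_le_sq (by rw [norm_sub_smul_sq_of_inner_eq hu hx]; linarith) hT

lemma norm_sub_le_of_inner_eq {w x y : E} {ρ T : ℝ} (hw : w ≠ 0) (hT : 0 ≤ T)
    (hx : ⟪w, x⟫ = ρ * ‖w‖) (hy : ⟪w, y⟫ = ρ * ‖w‖)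
    (hxT : ‖x‖ ^ 2 ≤ ρ ^ 2 + T ^ 2) (hyT : ‖y‖ ^ 2 ≤ ρ ^ 2 + T ^ 2) :
    ‖x - y‖ ≤ 2 * T := by
  set u := ‖w‖⁻¹ • w
  have hu : ‖u‖ = 1 := norm_smul_inv_norm hw
  have hunit {z : E} (hz : ⟪w, z⟫ = ρ * ‖w‖) : ⟪u, z⟫ = ρ := by
    rw [real_inner_smul_left, hz, mul_left_comm, inv_mul_cancel₀ (norm_ne_zero_iff.mpr hw),
      mul_one]
  calc ‖x - y‖ ≤ ‖x - ρ • u‖ + ‖y - ρ • u‖ := by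
        simpa only [norm_sub_rev (ρ • u) y] using norm_sub_le_norm_sub_add_norm_sub x (ρ • u) y
    _ ≤ T + T := add_le_add (norm_sub_smul_le_of_inner_eq hu (hunit hx) hxT hT)
        (norm_sub_smul_le_of_inner_eq hu (hunit hy) hyT hT)
    _ = 2 * T := (two_mul T).symm

end CircumscribedPolytope

lemma exists_primitive_mul {ι : Type*} [Fintype ι] {c : ι → ℤ} (hc : c ≠ 0) :
    ∃ (g : ℕ) (b : ι → ℤ), 0 < g ∧ Finset.univ.gcd (fun i => (b i).natAbs) = 1 ∧
      c = fun i => g * b i := by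
  obtain ⟨j, hj⟩ := Function.ne_iff.mp hc
  set g := Finset.univ.gcd fun i => (c i).natAbs
  have hdvd (i : ι) : (g : ℤ) ∣ c i :=
    Int.natCast_dvd.mpr (Finset.gcd_dvd (Finset.mem_univ i))
  refine ⟨g, fun i => c i / g, Nat.pos_of_ne_zero fun hg => hj ?_, ?_,
    funext fun i => (Int.mul_ediv_cancel' (hdvd i)).symm⟩
  · exact Int.natAbs_eq_zero.mp (Finset.gcd_eq_zero_iff.mp hg j (Finset.mem_univ j))
  · simp only [Int.natAbs_ediv_of_dvd (hdvd _), Int.natAbs_natCast]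
    exact Finset.gcd_div_eq_one (Finset.mem_univ j) (Int.natAbs_ne_zero.mpr hj)

section EuclideanCoordinates

variable {ι : Type*}

lemma EuclideanSpace.norm_toLp_eq_sqrt [Fintype ι] (x : ι → ℝ) :
    ‖WithLp.toLp 2 x‖ = √(∑ i, x i ^ 2) := by
  simp [EuclideanSpace.norm_eq]

lemma EuclideanSpace.real_inner_toLp_toLp [Fintype ι] (x y : ι → ℝ) :
    ⟪WithLp.toLp 2 x, WithLp.toLp 2 y⟫ = ∑ i, x i * y i := by
  simp [EuclideanSpace.inner_toLp_toLp, dotProduct, mul_comm]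

def intVec (c : ι → ℤ) : EuclideanSpace ℝ ι := WithLp.toLp 2 fun i => (c i : ℝ)

@[simp]
lemma intVec_zero : intVec (0 : ι → ℤ) = 0 := by ext; simp [intVec]

lemma intVec_ne_zero {c : ι → ℤ} (hc : c ≠ 0) : intVec c ≠ 0 := fun h =>
  hc (funext fun i => by simpa [intVec] using congrArg (· i) h)

def intLattice (ι : Type*) : Set (EuclideanSpace ℝ ι) := Set.range intVec

lemma exists_intVec_norm_sub_le [Fintype ι] (v : EuclideanSpace ℝ ι) :
    ∃ c : ι → ℤ, ‖intVec c - v‖ ≤ √(Fintype.card ι) / 2 := by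
  refine ⟨fun i => round (v i), ?_⟩
  have hsq : ‖intVec (fun i => round (v i)) - v‖ ^ 2 ≤ (√(Fintype.card ι) / 2) ^ 2 := by
    rw [EuclideanSpace.real_norm_sq_eq, div_pow, Real.sq_sqrt (Nat.cast_nonneg _)]
    calc ∑ i, (round (v i) - v i) ^ 2 ≤ ∑ _i : ι, (1 / 2 : ℝ) ^ 2 := by
          refine Finset.sum_le_sum fun i _ => sq_le_sq.mpr ?_
          simpa [abs_sub_comm] using abs_sub_round (v i)
      _ = Fintype.card ι / 2 ^ 2 := by simp; ring
  exact le_of_sq_le_sq hsq (by positivity)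

lemma exists_mem_intLattice_norm_sub_smul_le [Fintype ι] {L : ℝ} (hL : 0 ≤ L)
    {u : EuclideanSpace ℝ ι} (hu : ‖u‖ = 1) :
    ∃ c ∈ intLattice ι ∩ Metric.closedBall 0 (L + √(Fintype.card ι) / 2),
      ‖c - L • u‖ ≤ √(Fintype.card ι) / 2 := by
  obtain ⟨c, hc⟩ := exists_intVec_norm_sub_le (L • u)
  refine ⟨intVec c, ⟨⟨c, rfl⟩, ?_⟩, hc⟩
  rw [mem_closedBall_zero_iff]
  calc ‖intVec c‖ ≤ ‖L • u‖ + ‖intVec c - L • u‖ := norm_le_norm_add_norm_sub' _ _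
    _ ≤ L + √(Fintype.card ι) / 2 := by
        rw [norm_smul, hu, mul_one, Real.norm_of_nonneg hL]
        gcongr

end EuclideanCoordinates

lemma InCircumPolytope.inner_le {d : ℕ} {R ρ : ℝ} {x : Fin d → ℝ}
    (hx : InCircumPolytope d R ρ x) {v : EuclideanSpace ℝ (Fin d)}
    (hv : v ∈ intLattice (Fin d) ∩ Metric.closedBall 0 R) :
    ⟪v, WithLp.toLp 2 x⟫ ≤ ρ * ‖v‖ := by
  obtain ⟨⟨c, rfl⟩, hcR⟩ := hv
  rw [mem_closedBall_zero_iff] at hcR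
  rcases eq_or_ne c 0 with rfl | hc
  · simp
  obtain ⟨g, b, hg, hb, rfl⟩ := exists_primitive_mul hc
  have hscale : intVec (fun i => g * b i) = (g : ℝ) • intVec b := by ext; simp [intVec]
  have hg1 : (1 : ℝ) ≤ g := by exact_mod_cast hg
  have hbR : ‖intVec b‖ ≤ R := calc
    ‖intVec b‖ ≤ g * ‖intVec b‖ := le_mul_of_one_le_left (norm_nonneg _) hg1
    _ ≤ R := by rwa [hscale, norm_smul, Real.norm_natCast] at hcR
  have hb0 : b ≠ 0 := by rintro rfl; exact hc (funext fun i => by simp)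
  have hprim := hx b ⟨hb0, hb, by rwa [intVec, EuclideanSpace.norm_toLp_eq_sqrt] at hbR⟩
  rw [← EuclideanSpace.real_inner_toLp_toLp, ← EuclideanSpace.norm_toLp_eq_sqrt] at hprim
  rw [hscale, real_inner_smul_left, norm_smul, Real.norm_natCast, mul_left_comm]
  exact mul_le_mul_of_nonneg_left hprim (by positivity)

-- `2 ρ s / (R - 2 s) < n / t` for `ρ = √d n / 2`, `s = √d / 2`, `R = d t`.
lemma two_mul_facet_radius_lt {d n t : ℝ} (hd : 1 < d) (ht : 2 ≤ t) (hn : 0 < n) :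
    2 * (√d / 2 * n * (√d / 2) / (d * t - √d / 2 - √d / 2)) < n / t := by
  have hdd : √d * √d = d := Real.mul_self_sqrt (by linarith)
  have hsd : √d < d := Real.sqrt_lt_self_iff.mpr hd
  have hdt : 2 * √d < d * t := by nlinarith
  have hnum : 2 * (√d / 2 * n * (√d / 2)) * t = d * n * t / 2 := by
    linear_combination n * t / 2 * hdd
  rw [← mul_div_assoc, div_lt_div_iff₀ (by linarith [Real.sqrt_nonneg d]) (by linarith), hnum]
  nlinarith [mul_lt_mul_of_pos_left hdt hn]

theorem stmt_13_general (d : ℕ) (hd : 2 ≤ d) (μ : ℝ) (hμ1 : μ < 1) :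
    ∃ N : ℕ, ∀ n : ℕ, N ≤ n →
      ∀ b : Fin d → ℤ, IsPrimitiveShort d ((d : ℝ) * (n : ℝ) ^ (1 - μ)) b →
        ∀ x y : Fin d → ℝ,
          InCircumPolytope d ((d : ℝ) * (n : ℝ) ^ (1 - μ)) (Real.sqrt d / 2 * n) x →
          InCircumPolytope d ((d : ℝ) * (n : ℝ) ^ (1 - μ)) (Real.sqrt d / 2 * n) y →
          (∑ i, (b i : ℝ) * x i) =
            Real.sqrt d / 2 * n * Real.sqrt (∑ i, ((b i : ℝ)) ^ 2) →
          (∑ i, (b i : ℝ) * y i) =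
            Real.sqrt d / 2 * n * Real.sqrt (∑ i, ((b i : ℝ)) ^ 2) →
          Real.sqrt (∑ i, (x i - y i) ^ 2) < (n : ℝ) ^ μ := by
  obtain ⟨N, hN⟩ := Filter.eventually_atTop.mp <|
    ((tendsto_rpow_atTop (sub_pos.mpr hμ1)).comp tendsto_natCast_atTop_atTop).eventually_ge_atTop
      2
  refine ⟨N, fun n hn b hb x y hx hy hbx hby => ?_⟩
  have ht : 2 ≤ (n : ℝ) ^ (1 - μ) := hN n hn
  have hn0 : 0 < (n : ℝ) := Nat.cast_pos.mpr <| Nat.pos_of_ne_zero fun h => by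
    rw [h, Nat.cast_zero, Real.zero_rpow (sub_pos.mpr hμ1).ne'] at ht
    norm_num at ht
  have hd1 : (1 : ℝ) < d := by exact_mod_cast hd
  set R := (d : ℝ) * (n : ℝ) ^ (1 - μ)
  set ρ := √d / 2 * n
  have hsR : √d / 2 < R - √d / 2 := by nlinarith [Real.sqrt_lt_self_iff.mpr hd1]
  have hs0 : 0 ≤ √d / 2 := by positivity
  have hρ0 : 0 ≤ ρ := by positivity
  set s := √d / 2
  have hnorm {z : Fin d → ℝ} (hz : InCircumPolytope d R ρ z) :
      ‖WithLp.toLp 2 z‖ ^ 2 ≤ ρ ^ 2 + (ρ * s / (R - s - s)) ^ 2 := by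
    refine sq_norm_le_of_forall_inner_le (fun c hc => hz.inner_le hc) (fun u hu => ?_) hsR
    simpa [s] using exists_mem_intLattice_norm_sub_smul_le (L := R - s) (by linarith) hu
  have hfacet {z : Fin d → ℝ} (hz : ∑ i, (b i : ℝ) * z i = ρ * √(∑ i, ((b i : ℝ)) ^ 2)) :
      ⟪intVec b, WithLp.toLp 2 z⟫ = ρ * ‖intVec b‖ := by
    rwa [intVec, EuclideanSpace.real_inner_toLp_toLp, EuclideanSpace.norm_toLp_eq_sqrt]
  calc √(∑ i, (x i - y i) ^ 2) = ‖WithLp.toLp 2 x - WithLp.toLp 2 y‖ := by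
        rw [← WithLp.toLp_sub, EuclideanSpace.norm_toLp_eq_sqrt]; rfl
    _ ≤ 2 * (ρ * s / (R - s - s)) :=
        norm_sub_le_of_inner_eq (intVec_ne_zero hb.1) (div_nonneg (by positivity) (by linarith))
          (hfacet hbx) (hfacet hby) (hnorm hx) (hnorm hy)
    _ < n / (n : ℝ) ^ (1 - μ) := two_mul_facet_radius_lt hd1 ht hn0
    _ = (n : ℝ) ^ μ := by rw [Real.rpow_sub hn0, Real.rpow_one, div_div_cancel₀ hn0.ne']

/-- Every facet of the circumscribed polytope of the sphere of radius `(√d/2)n` cut out by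
primitive normal vectors of norm at most `R = d·n^{1-μ}` has diameter less than `n^μ`,
for `n` sufficiently large. -/
theorem stmt_13 (d : ℕ) (hd : 2 ≤ d) (μ : ℝ) (hμ0 : 0 ≤ μ) (hμ1 : μ < 1) :
    ∃ N : ℕ, ∀ n : ℕ, N ≤ n →
      ∀ b : Fin d → ℤ, IsPrimitiveShort d ((d : ℝ) * (n : ℝ) ^ (1 - μ)) b →
        ∀ x y : Fin d → ℝ,
          InCircumPolytope d ((d : ℝ) * (n : ℝ) ^ (1 - μ)) (Real.sqrt d / 2 * n) x →
          InCircumPolytope d ((d : ℝ) * (n : ℝ) ^ (1 - μ)) (Real.sqrt d / 2 * n) y →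
          (∑ i, (b i : ℝ) * x i) =
            Real.sqrt d / 2 * n * Real.sqrt (∑ i, ((b i : ℝ)) ^ 2) →
          (∑ i, (b i : ℝ) * y i) =
            Real.sqrt d / 2 * n * Real.sqrt (∑ i, ((b i : ℝ)) ^ 2) →
          Real.sqrt (∑ i, (x i - y i) ^ 2) < (n : ℝ) ^ μ :=
  stmt_13_general d hd μ hμ1
end

section
/- Fix p ∈ (0,1), q = 1-p. For k = (k₀,...,k_{l-1}) with 0 ≤ k₀ < k₁ < ... < k_{l-1} and z_i = p·w_i + q for each i, the weighted monomial identity holds: p^l · z₀^{k₀} z₁^{k₁-k₀-1} ··· z_{l-1}^{k_{l-1}-k_{l-2}-1} = Σ_{0 ≤ j₀ < j₁ < ... < j_{l-1}} binom(k₀, j₀) · Π_{h=1}^{l-1} binom(k_h - k_{h-1} - 1, j_h - j_{h-1} - 1) · p^{j_{l-1}+1} q^{k_{l-1} - j_{l-1}} · w₀^{j₀} w₁^{j₁-j₀-1} ··· w_{l-1}^{j_{l-1}-j_{l-2}-1}. -/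
/-!
Write `e = gaps k` for the exponents of `z^{⊙k}`. Expanding every `(p wᵢ + q)^{eᵢ}` by the
binomial theorem gives a sum over exponent vectors `m ≤ e`, and the term of `m` carries
`p^{Σ m} q^{Σ e - Σ m} w^{m}`. Reading `m` as the gap vector of an increasing tuple `j`
(`j₀ = m₀`, `j_{h+1} = j_h + m_{h+1} + 1`) turns `Σ m + l - 1` into `j_{l-1}` and `Σ e + l - 1`
into `k_{l-1}`, which is the right-hand side; tuples `j` whose gaps exceed those of `k`
contribute `0` through a vanishing binomial coefficient.
-/

open Finset

namespace Fin

variable {n : ℕ}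

/-- The exponents `k₀, k₁ - k₀ - 1, …, k_{l-1} - k_{l-2} - 1` of `z^{⊙k}`. -/
def gaps (k : Fin (n + 1) → ℕ) : Fin (n + 1) → ℕ :=
  cons (k 0) fun i => k i.succ - k i.castSucc - 1

def ofGaps (m : Fin (n + 1) → ℕ) : Fin (n + 1) → ℕ :=
  Fin.induction (m 0) fun i s => s + m i.succ + 1

variable {k m : Fin (n + 1) → ℕ}

@[simp] lemma gaps_zero : gaps k 0 = k 0 := rfl

@[simp] lemma gaps_succ (i : Fin n) : gaps k i.succ = k i.succ - k i.castSucc - 1 := rfl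

@[simp] lemma ofGaps_zero : ofGaps m 0 = m 0 := rfl

@[simp] lemma ofGaps_succ (i : Fin n) : ofGaps m i.succ = ofGaps m i.castSucc + m i.succ + 1 :=
  rfl

lemma strictMono_ofGaps : StrictMono (ofGaps m) :=
  strictMono_iff_lt_succ.2 fun i => by simp only [ofGaps_succ]; omega

@[simp] lemma gaps_ofGaps : gaps (ofGaps m) = m :=
  funext <| Fin.cases rfl fun i => by simp only [gaps_succ, ofGaps_succ]; omega

lemma ofGaps_gaps (hk : StrictMono k) : ofGaps (gaps k) = k := by
  funext i
  induction i using Fin.induction with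
  | zero => rfl
  | succ i ih =>
    have := hk (castSucc_lt_succ (i := i))
    simp only [ofGaps_succ, ih, gaps_succ]
    omega

lemma ofGaps_castSucc (m : Fin (n + 2) → ℕ) (i : Fin (n + 1)) :
    ofGaps m i.castSucc = ofGaps (fun t => m t.castSucc) i := by
  induction i using Fin.induction with
  | zero => rfl
  | succ i ih => rw [← succ_castSucc, ofGaps_succ, ofGaps_succ, ih]; rfl

lemma ofGaps_last (m : Fin (n + 1) → ℕ) : ofGaps m (last n) = ∑ i, m i + n := by
  induction n with
  | zero => simp
  | succ n ih =>
    rw [← succ_last, ofGaps_succ, ofGaps_castSucc, ih, sum_univ_castSucc (f := m)]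
    simp only [succ_last, Nat.succ_eq_add_one]
    omega

lemma sum_gaps_add (hk : StrictMono k) : ∑ i, gaps k i + n = k (last n) := by
  rw [← ofGaps_last, ofGaps_gaps hk]

lemma ofGaps_le_last_of_le (hk : StrictMono k) (hm : m ≤ gaps k) (i : Fin (n + 1)) :
    ofGaps m i ≤ k (last n) := by
  rw [← sum_gaps_add hk]
  calc ofGaps m i ≤ ofGaps m (last n) := strictMono_ofGaps.monotone (le_last i)
    _ = ∑ i, m i + n := ofGaps_last m
    _ ≤ ∑ i, gaps k i + n := by gcongr with i; exact hm i

end Fin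

section

variable {ι R : Type*} [Fintype ι] [CommSemiring R]

lemma mem_piFinset_range_succ_iff [DecidableEq ι] {e m : ι → ℕ} :
    m ∈ Fintype.piFinset (fun i => range (e i + 1)) ↔ m ≤ e := by
  simp only [Fintype.mem_piFinset, mem_range, Nat.lt_succ_iff, Pi.le_def]

lemma prod_add_pow_eq_sum_piFinset [DecidableEq ι] (x y : ι → R) (e : ι → ℕ) :
    ∏ i, (x i + y i) ^ e i =
      ∑ m ∈ Fintype.piFinset fun i => range (e i + 1),
        ∏ i, x i ^ m i * y i ^ (e i - m i) * (e i).choose (m i) := by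
  simp_rw [add_pow]
  exact prod_univ_sum _ _

lemma prod_mul_pow_mul_pow_tsub_mul_choose (x y : R) (w : ι → R) {e m : ι → ℕ} (hm : m ≤ e) :
    ∏ i, (x * w i) ^ m i * y ^ (e i - m i) * (e i).choose (m i) =
      (∏ i, ((e i).choose (m i) : R)) * x ^ (∑ i, m i) * y ^ (∑ i, e i - ∑ i, m i) *
        ∏ i, w i ^ m i := by
  simp only [prod_mul_distrib, mul_pow, prod_pow_eq_pow_sum,
    ← sum_tsub_distrib _ fun i _ => hm i]
  ring

open Fin in
theorem pow_mul_prod_add_pow_gaps {n : ℕ} (p q : R) (w : Fin (n + 1) → R) {k : Fin (n + 1) → ℕ}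
    (hk : StrictMono k) :
    p ^ (n + 1) * ∏ i, (p * w i + q) ^ gaps k i =
      ∑ j ∈ univ.filter
          (fun j : Fin (n + 1) → Fin (k (last n) + 1) => StrictMono fun i => (j i : ℕ)),
        (∏ i, ((gaps k i).choose (gaps (fun i => (j i : ℕ)) i) : R)) *
          p ^ ((j (last n) : ℕ) + 1) * q ^ (k (last n) - j (last n)) *
          ∏ i, w i ^ gaps (fun i => (j i : ℕ)) i := by
  classical
  rw [prod_add_pow_eq_sum_piFinset, mul_sum, eq_comm,
    ← sum_filter_of_ne (p := fun j => gaps (fun i => (j i : ℕ)) ≤ gaps k), filter_filter]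
  · refine sum_bij' (fun j _ => gaps fun i => (j i : ℕ))
      (fun m hm i => ⟨ofGaps m i, Nat.lt_succ_of_le <|
        ofGaps_le_last_of_le hk (mem_piFinset_range_succ_iff.1 hm) i⟩) ?_ ?_ ?_ ?_ ?_
    · intro j hj
      exact mem_piFinset_range_succ_iff.2 (mem_filter.1 hj).2.2
    · intro m hm
      exact mem_filter.2 ⟨mem_univ _, strictMono_ofGaps, by
        simpa only [gaps_ofGaps] using mem_piFinset_range_succ_iff.1 hm⟩
    · intro j hj
      funext i
      exact Fin.ext (congrFun (ofGaps_gaps (mem_filter.1 hj).2.1) i)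
    · intro m _
      simp
    · intro j hj
      obtain ⟨-, hj, hle⟩ := mem_filter.1 hj
      have hlast : (j (last n) : ℕ) = ∑ i, gaps (fun i => (j i : ℕ)) i + n := by
        rw [← ofGaps_last, ofGaps_gaps hj]
      have hexp : k (last n) - (j (last n) : ℕ) =
          ∑ i, gaps k i - ∑ i, gaps (fun i => (j i : ℕ)) i := by
        have := sum_gaps_add hk
        omega
      rw [prod_mul_pow_mul_pow_tsub_mul_choose _ _ _ hle, hexp, hlast]
      ring
  · intro j _ hne
    by_contra hle
    obtain ⟨i, hi⟩ : ∃ i, gaps k i < gaps (fun i => (j i : ℕ)) i := by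
      simpa [Pi.le_def] using hle
    refine hne ?_
    rw [prod_eq_zero (mem_univ i) (by rw [Nat.choose_eq_zero_of_lt hi, Nat.cast_zero])]
    simp

end

theorem stmt_17_general (p : ℝ) (l' : ℕ) (k : Fin (l' + 1) → ℕ)
    (hk : StrictMono k) (w z : Fin (l' + 1) → ℂ)
    (hz : ∀ i, z i = (p : ℂ) * w i + ((1 - p : ℝ) : ℂ)) :
    (p : ℂ) ^ (l' + 1) *
        (z 0 ^ k 0 * ∏ h : Fin l', z h.succ ^ (k h.succ - k h.castSucc - 1)) =
      ∑ j ∈ Finset.univ.filter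
          (fun j : Fin (l' + 1) → Fin (k (Fin.last l') + 1) =>
            ∀ a b : Fin (l' + 1), a < b → (j a : ℕ) < (j b : ℕ)),
        (((k 0).choose (j 0 : ℕ) : ℂ) *
            ∏ h : Fin l',
              (((k h.succ - k h.castSucc - 1).choose
                ((j h.succ : ℕ) - (j h.castSucc : ℕ) - 1) : ℕ) : ℂ)) *
          (p : ℂ) ^ ((j (Fin.last l') : ℕ) + 1) *
          ((1 - p : ℝ) : ℂ) ^ (k (Fin.last l') - (j (Fin.last l') : ℕ)) *
          (w 0 ^ (j 0 : ℕ) *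
            ∏ h : Fin l', w h.succ ^ ((j h.succ : ℕ) - (j h.castSucc : ℕ) - 1)) := by
  have hz' : z 0 ^ k 0 * ∏ h : Fin l', z h.succ ^ (k h.succ - k h.castSucc - 1) =
      ∏ i, ((p : ℂ) * w i + ((1 - p : ℝ) : ℂ)) ^ Fin.gaps k i := by
    rw [Fin.prod_univ_succ]
    simp only [hz, Fin.gaps_zero, Fin.gaps_succ]
  rw [hz', pow_mul_prod_add_pow_gaps _ _ _ hk]
  refine sum_congr (filter_congr fun j _ => ⟨fun h a b => @h a b, fun h a b => h a b⟩)
    fun j _ => ?_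
  simp only [Fin.prod_univ_succ, Fin.gaps_zero, Fin.gaps_succ]

/-- The weighted monomial identity underlying the `W`-generating identity for the deletion
channel: for `0 ≤ k₀ < k₁ < ⋯ < k_{l-1}` and `z_i = p·w_i + q` with `q = 1-p`,
`p^l·z^{⊙k} = Σ_{0 ≤ j₀ < ⋯ < j_{l-1} ≤ k_{l-1}} binom(k₀,j₀)·Π_h binom(k_h-k_{h-1}-1, j_h-j_{h-1}-1)
· p^{j_{l-1}+1} q^{k_{l-1}-j_{l-1}} · w^{⊙j}`. -/
theorem stmt_17 (p : ℝ) (hp0 : 0 < p) (hp1 : p < 1) (l' : ℕ) (k : Fin (l' + 1) → ℕ)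
    (hk : StrictMono k) (w z : Fin (l' + 1) → ℂ)
    (hz : ∀ i, z i = (p : ℂ) * w i + ((1 - p : ℝ) : ℂ)) :
    (p : ℂ) ^ (l' + 1) *
        (z 0 ^ k 0 * ∏ h : Fin l', z h.succ ^ (k h.succ - k h.castSucc - 1)) =
      ∑ j ∈ Finset.univ.filter
          (fun j : Fin (l' + 1) → Fin (k (Fin.last l') + 1) =>
            ∀ a b : Fin (l' + 1), a < b → (j a : ℕ) < (j b : ℕ)),
        (((k 0).choose (j 0 : ℕ) : ℂ) *
            ∏ h : Fin l',
              (((k h.succ - k h.castSucc - 1).choose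
                ((j h.succ : ℕ) - (j h.castSucc : ℕ) - 1) : ℕ) : ℂ)) *
          (p : ℂ) ^ ((j (Fin.last l') : ℕ) + 1) *
          ((1 - p : ℝ) : ℂ) ^ (k (Fin.last l') - (j (Fin.last l') : ℕ)) *
          (w 0 ^ (j 0 : ℕ) *
            ∏ h : Fin l', w h.succ ^ ((j h.succ : ℕ) - (j h.castSucc : ℕ) - 1)) :=
  stmt_17_general p l' k hk w z hz
end
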